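/- arXiv:math/0606506 — 6 statements merged into one kernel-verified Lean document; each statement's English description precedes it below -/
import Mathlib

section
/- There exists a ℂ-algebra anti-homomorphism S : g_{p₊,p₋} → g_{p₊,p₋} with S(K) = K^{-1}, S(E₊) = −K^{-p₋}·E₊, S(F₊) = −F₊·K^{p₋}, S(E₋) = −E₋·K^{-p₊}, S(F₋) = −K^{p₊}·F₋ (the antipode), and it satisfies S(S(x)) = G·x·G^{-1} for all x ∈ g_{p₊,p₋}, where G := K^{p₊−p₋} is the balancing element (powers of K being taken modulo the relation K^{2p₊p₋} = 1). -/
noncomputable section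

/-- Generators of the quantum group `g_{p₊,p₋}`. -/
inductive QGGen : Type
  | Ep | Fp | Em | Fm | K

open FreeAlgebra QGGen

/-- `q = exp(iπ/p)`. -/
def rootOfUnity (p : ℕ) : ℂ := Complex.exp (Real.pi * Complex.I / p)

/-- The defining relations of the quantum group `g_{p₊,p₋}`. -/
inductive QGRel (pp pm : ℕ) : FreeAlgebra ℂ QGGen → FreeAlgebra ℂ QGGen → Prop
  | EpNil : QGRel pp pm (ι ℂ Ep ^ pp) 0
  | FpNil : QGRel pp pm (ι ℂ Fp ^ pp) 0
  | EmNil : QGRel pp pm (ι ℂ Em ^ pm) 0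
  | FmNil : QGRel pp pm (ι ℂ Fm ^ pm) 0
  | KOrd : QGRel pp pm (ι ℂ K ^ (2 * pp * pm)) 1
  | KEp : QGRel pp pm (ι ℂ K * ι ℂ Ep)
      (algebraMap ℂ (FreeAlgebra ℂ QGGen) ((rootOfUnity pp) ^ 2) * (ι ℂ Ep * ι ℂ K))
  | KFp : QGRel pp pm (ι ℂ K * ι ℂ Fp)
      (algebraMap ℂ (FreeAlgebra ℂ QGGen) (((rootOfUnity pp) ^ 2)⁻¹) * (ι ℂ Fp * ι ℂ K))
  | KEm : QGRel pp pm (ι ℂ K * ι ℂ Em)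
      (algebraMap ℂ (FreeAlgebra ℂ QGGen) ((rootOfUnity pm) ^ 2) * (ι ℂ Em * ι ℂ K))
  | KFm : QGRel pp pm (ι ℂ K * ι ℂ Fm)
      (algebraMap ℂ (FreeAlgebra ℂ QGGen) (((rootOfUnity pm) ^ 2)⁻¹) * (ι ℂ Fm * ι ℂ K))
  | EpEm : QGRel pp pm (ι ℂ Ep * ι ℂ Em) (ι ℂ Em * ι ℂ Ep)
  | FpFm : QGRel pp pm (ι ℂ Fp * ι ℂ Fm) (ι ℂ Fm * ι ℂ Fp)
  | EpFm : QGRel pp pm (ι ℂ Ep * ι ℂ Fm) (ι ℂ Fm * ι ℂ Ep)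
  | EmFp : QGRel pp pm (ι ℂ Em * ι ℂ Fp) (ι ℂ Fp * ι ℂ Em)
  | EpFp : QGRel pp pm (ι ℂ Ep * ι ℂ Fp - ι ℂ Fp * ι ℂ Ep)
      (algebraMap ℂ (FreeAlgebra ℂ QGGen)
          (((rootOfUnity pp) ^ pm - ((rootOfUnity pp) ^ pm)⁻¹)⁻¹) *
        (ι ℂ K ^ pm - ι ℂ K ^ (2 * pp * pm - pm)))
  | EmFm : QGRel pp pm (ι ℂ Em * ι ℂ Fm - ι ℂ Fm * ι ℂ Em)
      (algebraMap ℂ (FreeAlgebra ℂ QGGen)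
          (((rootOfUnity pm) ^ pp - ((rootOfUnity pm) ^ pp)⁻¹)⁻¹) *
        (ι ℂ K ^ pp - ι ℂ K ^ (2 * pp * pm - pp)))

/-- The quantum group `g_{p₊,p₋}`. -/
abbrev QG (pp pm : ℕ) : Type := RingQuot (QGRel pp pm)

/-- The image of a generator in `g_{p₊,p₋}`. -/
def gen (pp pm : ℕ) (x : QGGen) : QG pp pm :=
  RingQuot.mkAlgHom ℂ (QGRel pp pm) (ι ℂ x)

section GenAux
variable {A : Type*} [Ring A] [Algebra ℂ A]

theorem comm_pow' {k x : A} {c : ℂ} (h : k * x = c • (x * k)) (m : ℕ) :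
    k ^ m * x = c ^ m • (x * k ^ m) := by
  induction m with
  | zero => simp
  | succ n ih =>
    calc k ^ (n+1) * x = k ^ n * (k * x) := by rw [pow_succ, mul_assoc]
    _ = k ^ n * (c • (x * k)) := by rw [h]
    _ = c • (k ^ n * x * k) := by rw [mul_smul_comm, mul_assoc]
    _ = c • (c ^ n • (x * k ^ n) * k) := by rw [ih]
    _ = c ^ (n+1) • (x * k ^ (n+1)) := by
        rw [smul_mul_assoc, smul_smul, mul_assoc, ← pow_succ, ← pow_succ']

theorem ext_comm {a b : A} {c : ℂ} (h : a * b = c • (b * a)) (z : A) :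
    a * (b * z) = c • (b * (a * z)) := by
  rw [← mul_assoc, h, smul_mul_assoc, mul_assoc]

theorem comm_rev {x y : A} {c : ℂ} (hc : c ≠ 0) (h : x * y = c • (y * x)) :
    y * x = c⁻¹ • (x * y) := by rw [h, inv_smul_smul₀ hc]

theorem swap_pow {x y : A} {c : ℂ} (h : x * y = c • (y * x)) (n : ℕ) :
    ∃ d : ℂ, (x * y) ^ n = d • (y ^ n * x ^ n) := by
  induction n with
  | zero => exact ⟨1, by simp⟩
  | succ n ih =>
    obtain ⟨d, hd⟩ := ih
    refine ⟨d * c * c ^ n, ?_⟩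
    have hxy : x ^ n * y = c ^ n • (y * x ^ n) := comm_pow' h n
    calc (x*y)^(n+1) = (x*y)^n * (x*y) := pow_succ _ _
    _ = (d • (y^n * x^n)) * (c • (y * x)) := by rw [hd, h]
    _ = (d * c) • (y^n * (x^n * y) * x) := by
        rw [smul_mul_assoc, mul_smul_comm, smul_smul, mul_assoc, mul_assoc, mul_assoc]
    _ = (d * c) • (y^n * (c ^ n • (y * x^n)) * x) := by rw [hxy]
    _ = (d * c * c ^ n) • (y^(n+1) * x^(n+1)) := by
        rw [mul_smul_comm, smul_mul_assoc, smul_smul, mul_assoc]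
        congr 1
        rw [pow_succ, pow_succ]
        simp [mul_assoc]

theorem kp_x {k x : A} {c : ℂ} (h : k * x = c • (x * k)) (m : ℕ) (z : A) :
    k ^ m * (x * z) = c ^ m • (x * (k ^ m * z)) := ext_comm (comm_pow' h m) z

omit [Algebra ℂ A] in
theorem kmerge (k : A) (a b : ℕ) (z : A) : k ^ a * (k ^ b * z) = k ^ (a + b) * z := by
  rw [← mul_assoc, ← pow_add]

omit [Algebra ℂ A] in
theorem wcomm {a b : A} (h : a * b = b * a) (z : A) : b * (a * z) = a * (b * z) := by
  rw [← mul_assoc, ← h, mul_assoc]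

end GenAux

theorem pow_congr_of_pow_eq_one {M : Type*} [Monoid M] {x : M} {n : ℕ} (h1 : x ^ n = 1)
    (s t α β : ℕ) (hab : α + n * s = β + n * t) : x ^ α = x ^ β := by
  have h2 : x ^ (α + n * s) = x ^ (β + n * t) := by rw [hab]
  simpa [pow_add, pow_mul, h1] using h2

theorem eq_of_same_inv {M : Type*} [Monoid M] {a b c : M} (h1 : b * a = 1) (h2 : c * b = 1) :
    c = a := by
  have := congrArg (· * a) h2
  simpa [mul_assoc, h1] using this

section Generic
variable {A : Type*} [Ring A] [Algebra ℂ A] {pp pm : ℕ} {k ep fp em fm : A} {q r c c' : ℂ}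

theorem GEpNil (hke : k * ep = q ^ 2 • (ep * k)) (hEN : ep ^ pp = 0) :
    (-(k ^ (2*pp*pm - pm) * ep)) ^ pp = 0 := by
  obtain ⟨d, hd⟩ := swap_pow (comm_pow' hke (2*pp*pm - pm)) pp
  rw [neg_pow, hd, hEN]
  simp

theorem GFpNil (hq0 : q ≠ 0) (hkf : k * fp = (q ^ 2)⁻¹ • (fp * k)) (hFN : fp ^ pp = 0) :
    (-(fp * k ^ pm)) ^ pp = 0 := by
  have h := comm_rev (pow_ne_zero _ (inv_ne_zero (pow_ne_zero 2 hq0))) (comm_pow' hkf pm)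
  obtain ⟨d, hd⟩ := swap_pow h pp
  rw [neg_pow, hd, hFN]
  simp

theorem GEmNil (hr0 : r ≠ 0) (hkE : k * em = r ^ 2 • (em * k)) (hEmN : em ^ pm = 0) :
    (-(em * k ^ (2*pp*pm - pp))) ^ pm = 0 := by
  have h := comm_rev (pow_ne_zero _ (pow_ne_zero 2 hr0)) (comm_pow' hkE (2*pp*pm - pp))
  obtain ⟨d, hd⟩ := swap_pow h pm
  rw [neg_pow, hd]
  simp only [hEmN]
  simp

theorem GFmNil (hkF : k * fm = (r ^ 2)⁻¹ • (fm * k)) (hFmN : fm ^ pm = 0) :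
    (-(k ^ pp * fm)) ^ pm = 0 := by
  obtain ⟨d, hd⟩ := swap_pow (comm_pow' hkF pp) pm
  rw [neg_pow, hd, hFmN]
  simp

omit [Algebra ℂ A] in
theorem GKOrd (hpp : 2 ≤ pp) (hpm : 2 ≤ pm) (hKo : k ^ (2*pp*pm) = 1) :
    (k ^ (2*pp*pm - 1)) ^ (2*pp*pm) = 1 := by
  rw [← pow_mul]
  calc k ^ ((2*pp*pm - 1) * (2*pp*pm)) = k ^ 0 :=
    pow_congr_of_pow_eq_one hKo 0 (2*pp*pm - 1) _ _ (by simp [Nat.mul_comm])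
  _ = 1 := pow_zero k
end Generic

section Generic2
variable {A : Type*} [Ring A] [Algebra ℂ A] {pp pm : ℕ} {k ep fp em fm : A} {q r c cm : ℂ}

theorem GKEp (hpp : 2 ≤ pp) (hpm : 2 ≤ pm) (hq : (q ^ 2) ^ pp = 1)
    (hke : k * ep = q ^ 2 • (ep * k)) :
    -(k ^ (2*pp*pm - pm) * ep) * k ^ (2*pp*pm - 1)
      = k ^ (2*pp*pm - 1) * -(k ^ (2*pp*pm - pm) * ep) * (algebraMap ℂ A q) ^ 2 := by
  have hpmN : pm ≤ 2*pp*pm := by nlinarith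
  have h1N : 1 ≤ 2*pp*pm := by nlinarith
  have hqN : (q ^ 2) ^ (2*pp*pm) = 1 := by
    rw [show 2*pp*pm = pp*(2*pm) by ring, pow_mul, hq, one_pow]
  set N := 2*pp*pm with hN
  rw [← map_pow, ← Algebra.commutes, ← Algebra.smul_def]
  simp only [neg_mul, mul_neg, neg_inj, smul_neg, mul_assoc, kp_x hke, comm_pow' hke,
    kmerge, smul_mul_assoc, mul_smul_comm, smul_smul, ← pow_add]
  congr 1
  · rw [← pow_succ']
    exact pow_congr_of_pow_eq_one hqN 1 0 _ _ (by omega)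
  · congr 2
    omega

theorem GKFp (hpp : 2 ≤ pp) (hpm : 2 ≤ pm) (hq : (q ^ 2) ^ pp = 1)
    (hkf : k * fp = (q ^ 2)⁻¹ • (fp * k)) :
    -(fp * k ^ pm) * k ^ (2*pp*pm - 1)
      = k ^ (2*pp*pm - 1) * -(fp * k ^ pm) * algebraMap ℂ A (q ^ 2)⁻¹ := by
  have hpmN : pm ≤ 2*pp*pm := by nlinarith
  have h1N : 1 ≤ 2*pp*pm := by nlinarith
  have hqiN : ((q ^ 2)⁻¹) ^ (2*pp*pm) = 1 := by
    rw [inv_pow, show 2*pp*pm = pp*(2*pm) by ring, pow_mul, hq, one_pow, inv_one]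
  set N := 2*pp*pm with hN
  rw [← Algebra.commutes, ← Algebra.smul_def]
  simp only [neg_mul, mul_neg, neg_inj, smul_neg, mul_assoc, kp_x hkf, comm_pow' hkf,
    kmerge, smul_mul_assoc, mul_smul_comm, smul_smul, ← pow_add]
  rw [show pm + (N-1) = N-1+pm by omega, ← pow_succ', show N-1+1 = N by omega, hqiN, one_smul]

theorem GKEm (hpp : 2 ≤ pp) (hpm : 2 ≤ pm) (hr : (r ^ 2) ^ pm = 1)
    (hkE : k * em = r ^ 2 • (em * k)) :
    -(em * k ^ (2*pp*pm - pp)) * k ^ (2*pp*pm - 1)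
      = k ^ (2*pp*pm - 1) * -(em * k ^ (2*pp*pm - pp)) * (algebraMap ℂ A r) ^ 2 := by
  have hppN : pp ≤ 2*pp*pm := by nlinarith
  have h1N : 1 ≤ 2*pp*pm := by nlinarith
  have hrN : (r ^ 2) ^ (2*pp*pm) = 1 := by
    rw [show 2*pp*pm = pm*(2*pp) by ring, pow_mul, hr, one_pow]
  set N := 2*pp*pm with hN
  rw [← map_pow, ← Algebra.commutes, ← Algebra.smul_def]
  simp only [neg_mul, mul_neg, neg_inj, smul_neg, mul_assoc, kp_x hkE, comm_pow' hkE,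
    kmerge, smul_mul_assoc, mul_smul_comm, smul_smul, ← pow_add]
  rw [show N-pp+(N-1) = N-1+(N-pp) by omega, ← pow_succ', show N-1+1 = N by omega, hrN, one_smul]

theorem GKFm (hpp : 2 ≤ pp) (hpm : 2 ≤ pm) (hr : (r ^ 2) ^ pm = 1)
    (hkF : k * fm = (r ^ 2)⁻¹ • (fm * k)) :
    -(k ^ pp * fm) * k ^ (2*pp*pm - 1)
      = k ^ (2*pp*pm - 1) * -(k ^ pp * fm) * algebraMap ℂ A (r ^ 2)⁻¹ := by
  have hppN : pp ≤ 2*pp*pm := by nlinarith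
  have h1N : 1 ≤ 2*pp*pm := by nlinarith
  have hriN : ((r ^ 2)⁻¹) ^ (2*pp*pm) = 1 := by
    rw [inv_pow, show 2*pp*pm = pm*(2*pp) by ring, pow_mul, hr, one_pow, inv_one]
  set N := 2*pp*pm with hN
  rw [← Algebra.commutes, ← Algebra.smul_def]
  simp only [neg_mul, mul_neg, neg_inj, smul_neg, mul_assoc, kp_x hkF, comm_pow' hkF,
    kmerge, smul_mul_assoc, mul_smul_comm, smul_smul, ← pow_add]
  rw [show pp + (N-1) = N-1+pp by omega]
  congr 1
  rw [← pow_succ']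
  exact pow_congr_of_pow_eq_one hriN 1 0 _ _ (by omega)

end Generic2

section Generic3
variable {A : Type*} [Ring A] [Algebra ℂ A] {pp pm : ℕ} {k ep fp em fm : A} {q r c cm : ℂ}

theorem GEpEm (hpp : 2 ≤ pp) (hpm : 2 ≤ pm) (hq : (q ^ 2) ^ pp = 1) (hr : (r ^ 2) ^ pm = 1)
    (hke : k * ep = q ^ 2 • (ep * k)) (hkE : k * em = r ^ 2 • (em * k))
    (hpe : ep * em = em * ep) :
    -(em * k ^ (2*pp*pm - pp)) * -(k ^ (2*pp*pm - pm) * ep)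
      = -(k ^ (2*pp*pm - pm) * ep) * -(em * k ^ (2*pp*pm - pp)) := by
  have hppN : pp ≤ 2*pp*pm := by nlinarith
  have hpmN : pm ≤ 2*pp*pm := by nlinarith
  have hqNpp : (q ^ 2) ^ (2*pp*pm - pp) = 1 := by
    rw [show 2*pp*pm - pp = pp*(2*pm - 1) by zify [hppN, show 1 ≤ 2*pm by omega]; ring,
      pow_mul, hq, one_pow]
  have hrNpm : (r ^ 2) ^ (2*pp*pm - pm) = 1 := by
    rw [show 2*pp*pm - pm = pm*(2*pp - 1) by zify [hpmN, show 1 ≤ 2*pp by omega]; ring,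
      pow_mul, hr, one_pow]
  set N := 2*pp*pm with hN
  simp only [neg_mul_neg, mul_assoc, kp_x hke, comm_pow' hke, kp_x hkE, comm_pow' hkE,
    wcomm hpe, ← hpe, kmerge, smul_mul_assoc, mul_smul_comm, smul_smul, ← pow_add]
  rw [show N-pp+(N-pm) = N-pm+(N-pp) by omega]
  congr 1
  rw [pow_add, hqNpp, hrNpm, mul_one]

theorem GFpFm (hpp : 2 ≤ pp) (hpm : 2 ≤ pm) (hq : (q ^ 2) ^ pp = 1) (hr : (r ^ 2) ^ pm = 1)
    (hkf : k * fp = (q ^ 2)⁻¹ • (fp * k)) (hkF : k * fm = (r ^ 2)⁻¹ • (fm * k))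
    (hff : fp * fm = fm * fp) :
    -(k ^ pp * fm) * -(fp * k ^ pm) = -(fp * k ^ pm) * -(k ^ pp * fm) := by
  have hqipp : ((q ^ 2)⁻¹) ^ pp = 1 := by rw [inv_pow, hq, inv_one]
  have hripm : ((r ^ 2)⁻¹) ^ pm = 1 := by rw [inv_pow, hr, inv_one]
  simp only [neg_mul_neg, mul_assoc, kp_x hkf, comm_pow' hkf, kp_x hkF, comm_pow' hkF,
    wcomm hff, ← hff, kmerge, smul_mul_assoc, mul_smul_comm, smul_smul, ← pow_add]
  rw [show pp+pm = pm+pp by omega]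
  congr 1
  rw [hqipp, mul_one, pow_add, hripm, one_mul]

theorem GEpFm (hpp : 2 ≤ pp) (hpm : 2 ≤ pm) (hq : (q ^ 2) ^ pp = 1) (hr : (r ^ 2) ^ pm = 1)
    (hke : k * ep = q ^ 2 • (ep * k)) (hkF : k * fm = (r ^ 2)⁻¹ • (fm * k))
    (hpf : ep * fm = fm * ep) :
    -(k ^ pp * fm) * -(k ^ (2*pp*pm - pm) * ep)
      = -(k ^ (2*pp*pm - pm) * ep) * -(k ^ pp * fm) := by
  have hpmN : pm ≤ 2*pp*pm := by nlinarith
  have hrNpm : ((r ^ 2)⁻¹) ^ (2*pp*pm - pm) = 1 := by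
    rw [inv_pow, show 2*pp*pm - pm = pm*(2*pp - 1) by zify [hpmN, show 1 ≤ 2*pp by omega]; ring,
      pow_mul, hr, one_pow, inv_one]
  set N := 2*pp*pm with hN
  simp only [neg_mul_neg, mul_assoc, kp_x hke, comm_pow' hke, kp_x hkF, comm_pow' hkF,
    wcomm hpf, ← hpf, kmerge, smul_mul_assoc, mul_smul_comm, smul_smul, ← pow_add]
  rw [show pp + (N-pm) = N-pm+pp by omega]
  congr 1
  rw [hq, hrNpm]
  ring

theorem GEmFp (hpp : 2 ≤ pp) (hpm : 2 ≤ pm) (hq : (q ^ 2) ^ pp = 1) (hr : (r ^ 2) ^ pm = 1)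
    (hkf : k * fp = (q ^ 2)⁻¹ • (fp * k)) (hkE : k * em = r ^ 2 • (em * k))
    (hmf : em * fp = fp * em) :
    -(fp * k ^ pm) * -(em * k ^ (2*pp*pm - pp))
      = -(em * k ^ (2*pp*pm - pp)) * -(fp * k ^ pm) := by
  have hppN : pp ≤ 2*pp*pm := by nlinarith
  have hqiNpp : ((q ^ 2)⁻¹) ^ (2*pp*pm - pp) = 1 := by
    rw [inv_pow, show 2*pp*pm - pp = pp*(2*pm - 1) by zify [hppN, show 1 ≤ 2*pm by omega]; ring,
      pow_mul, hq, one_pow, inv_one]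
  set N := 2*pp*pm with hN
  simp only [neg_mul_neg, mul_assoc, kp_x hkf, comm_pow' hkf, kp_x hkE, comm_pow' hkE,
    wcomm hmf, hmf, kmerge, smul_mul_assoc, mul_smul_comm, smul_smul, ← pow_add]
  rw [show pm + (N-pp) = N-pp+pm by omega]
  congr 1
  rw [hr, hqiNpp]

end Generic3

section Generic4
variable {A : Type*} [Ring A] [Algebra ℂ A] {pp pm : ℕ} {k ep fp em fm : A} {q r c cm : ℂ}

theorem GEpFp (hpp : 2 ≤ pp) (hpm : 2 ≤ pm) (hq0 : q ≠ 0) (hq : (q ^ 2) ^ pp = 1)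
    (hKo : k ^ (2*pp*pm) = 1)
    (hke : k * ep = q ^ 2 • (ep * k)) (hkf : k * fp = (q ^ 2)⁻¹ • (fp * k))
    (hEF : ep * fp - fp * ep = c • (k ^ pm - k ^ (2*pp*pm - pm))) :
    -(fp * k ^ pm) * -(k ^ (2*pp*pm - pm) * ep) - -(k ^ (2*pp*pm - pm) * ep) * -(fp * k ^ pm)
      = ((k ^ (2*pp*pm - 1)) ^ pm - (k ^ (2*pp*pm - 1)) ^ (2*pp*pm - pm))
          * algebraMap ℂ A c := by
  have hpmN : pm ≤ 2*pp*pm := by nlinarith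
  have h1N : 1 ≤ 2*pp*pm := by nlinarith
  have e1aux : (2*pp*pm - 1) * pm + pm = (2*pp*pm) * pm := by
    zify [h1N]; ring
  have e2aux : (2*pp*pm - 1) * (2*pp*pm - pm) + (2*pp*pm - pm) = (2*pp*pm) * (2*pp*pm - pm) := by
    zify [h1N]; ring
  set N := 2*pp*pm with hN
  have hq2 : (q ^ 2)⁻¹ ^ (N - pm) * (q ^ 2) ^ (N - pm) = 1 := by
    rw [inv_pow, inv_mul_cancel₀ (pow_ne_zero _ (pow_ne_zero _ hq0))]
  have e1 : (k ^ (N - 1)) ^ pm = k ^ (2*N - pm) := by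
    refine eq_of_same_inv (b := k ^ pm) ?_ ?_
    · rw [← pow_add, show pm + (2*N - pm) = N*2 by omega, pow_mul, hKo, one_pow]
    · rw [← pow_mul, ← pow_add, e1aux, pow_mul, hKo, one_pow]
  have e2 : (k ^ (N - 1)) ^ (N - pm) = k ^ pm := by
    refine eq_of_same_inv (b := k ^ (N - pm)) ?_ ?_
    · rw [← pow_add, show N - pm + pm = N by omega, hKo]
    · rw [← pow_mul, ← pow_add, e2aux, pow_mul, hKo, one_pow]
  have hepf : ep * fp = c • (k ^ pm - k ^ (N - pm)) + fp * ep := sub_eq_iff_eq_add.mp hEF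
  rw [e1, e2, ← Algebra.commutes, ← Algebra.smul_def, neg_mul_neg, neg_mul_neg,
    mul_assoc fp, kmerge, show pm + (N - pm) = N by omega, hKo, one_mul,
    mul_assoc, ← mul_assoc ep fp, hepf]
  simp only [add_mul, sub_mul, mul_add, mul_sub, smul_mul_assoc, mul_smul_comm, smul_sub,
    smul_smul, mul_assoc, kp_x hke, comm_pow' hke, kp_x hkf, comm_pow' hkf, kmerge,
    ← pow_add]
  rw [hq2, one_smul, show N-pm+pm = N by omega, hKo, mul_one,
    show N-pm+(pm+pm) = N+pm by omega, show N-pm+N = 2*N-pm by omega,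
    pow_add, hKo, one_mul]
  abel

theorem GEmFm (hpp : 2 ≤ pp) (hpm : 2 ≤ pm) (hr0 : r ≠ 0) (hr : (r ^ 2) ^ pm = 1)
    (hKo : k ^ (2*pp*pm) = 1)
    (hkE : k * em = r ^ 2 • (em * k)) (hkF : k * fm = (r ^ 2)⁻¹ • (fm * k))
    (hEFm : em * fm - fm * em = cm • (k ^ pp - k ^ (2*pp*pm - pp))) :
    -(k ^ pp * fm) * -(em * k ^ (2*pp*pm - pp)) - -(em * k ^ (2*pp*pm - pp)) * -(k ^ pp * fm)
      = ((k ^ (2*pp*pm - 1)) ^ pp - (k ^ (2*pp*pm - 1)) ^ (2*pp*pm - pp))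
          * algebraMap ℂ A cm := by
  have hppN : pp ≤ 2*pp*pm := by nlinarith
  have h1N : 1 ≤ 2*pp*pm := by nlinarith
  have e1aux : (2*pp*pm - 1) * pp + pp = (2*pp*pm) * pp := by
    zify [h1N]; ring
  have e2aux : (2*pp*pm - 1) * (2*pp*pm - pp) + (2*pp*pm - pp) = (2*pp*pm) * (2*pp*pm - pp) := by
    zify [h1N]; ring
  set N := 2*pp*pm with hN
  have hr2 : (r ^ 2) ^ pp * (r ^ 2)⁻¹ ^ pp = 1 := by
    rw [inv_pow, mul_inv_cancel₀ (pow_ne_zero _ (pow_ne_zero _ hr0))]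
  have e1 : (k ^ (N - 1)) ^ pp = k ^ (2*N - pp) := by
    refine eq_of_same_inv (b := k ^ pp) ?_ ?_
    · rw [← pow_add, show pp + (2*N - pp) = N*2 by omega, pow_mul, hKo, one_pow]
    · rw [← pow_mul, ← pow_add, e1aux, pow_mul, hKo, one_pow]
  have e2 : (k ^ (N - 1)) ^ (N - pp) = k ^ pp := by
    refine eq_of_same_inv (b := k ^ (N - pp)) ?_ ?_
    · rw [← pow_add, show N - pp + pp = N by omega, hKo]
    · rw [← pow_mul, ← pow_add, e2aux, pow_mul, hKo, one_pow]
  have hfme : fm * em = em * fm - cm • (k ^ pp - k ^ (N - pp)) := by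
    rw [← hEFm]; abel
  rw [e1, e2, ← Algebra.commutes, ← Algebra.smul_def, neg_mul_neg, neg_mul_neg,
    mul_assoc em, kmerge, show N - pp + pp = N by omega, hKo, one_mul,
    mul_assoc (k ^ pp), ← mul_assoc fm em, hfme]
  simp only [sub_mul, mul_sub, smul_mul_assoc, mul_smul_comm, smul_sub, smul_smul,
    mul_assoc, kp_x hkE, comm_pow' hkE, kp_x hkF, comm_pow' hkF, kmerge, ← pow_add]
  rw [hr2, one_smul, show pp+(N-pp) = N by omega, hKo, mul_one,
    show pp + N = N + pp by omega, show pp+(N-pp+(N-pp)) = 2*N-pp by omega,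
    pow_add, hKo, one_mul]
  abel

end Generic4

section Generic5
variable {A : Type*} [Ring A] [Algebra ℂ A] {pp pm : ℕ} {k ep fp em fm : A} {q r : ℂ}

omit [Algebra ℂ A] in
theorem Gunit {n u v : ℕ} (hKo : k ^ n = 1) (h : u + v = n * 2) : k ^ u * k ^ v = 1 := by
  rw [← pow_add, h, pow_mul, hKo, one_pow]

omit [Algebra ℂ A] in
theorem Gclosure {x y : A} {a b : ℕ} (h : k ^ b * k ^ a = 1) :
    (k ^ a * x * k ^ b) * (k ^ a * y * k ^ b) = k ^ a * (x * y) * k ^ b := by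
  have : k ^ a * x * k ^ b * (k ^ a * y * k ^ b)
      = k ^ a * x * (k ^ b * k ^ a) * y * k ^ b := by noncomm_ring
  rw [this, h, mul_one, mul_assoc (k ^ a), mul_assoc (k ^ a)]

omit [Algebra ℂ A] in
theorem Gadd {x y : A} {a b : ℕ} :
    k ^ a * x * k ^ b + k ^ a * y * k ^ b = k ^ a * (x + y) * k ^ b := by noncomm_ring

theorem Galg {a b : ℕ} (h : k ^ a * k ^ b = 1) (t : ℂ) :
    k ^ a * algebraMap ℂ A t * k ^ b = algebraMap ℂ A t := by
  rw [← Algebra.commutes, mul_assoc, h, mul_one]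

omit [Algebra ℂ A] in
theorem G2K (hpp : 2 ≤ pp) (hpm : 2 ≤ pm) (hKo : k ^ (2*pp*pm) = 1) :
    (k ^ (2*pp*pm - 1)) ^ (2*pp*pm - 1)
      = k ^ (2*pp*pm + pp - pm) * k * k ^ (2*pp*pm + pm - pp) := by
  have h2N : 2 ≤ 2*pp*pm := by nlinarith
  have hppN : pp ≤ 2*pp*pm := by nlinarith
  have hpmN : pm ≤ 2*pp*pm := by nlinarith
  have h1N : 1 ≤ 2*pp*pm := by nlinarith
  have hx1 : pm ≤ 2*pp*pm + pp := by omega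
  have hx2 : pp ≤ 2*pp*pm + pm := by omega
  have arith : (2*pp*pm - 1) * (2*pp*pm - 1) + (2*pp*pm) * 2
      = ((2*pp*pm + pp - pm) + (1 + (2*pp*pm + pm - pp))) + (2*pp*pm) * (2*pp*pm - 2) := by
    zify [h1N, h2N, hx1, hx2]; ring
  set N := 2*pp*pm with hN
  rw [← pow_mul, show k ^ (N + pp - pm) * k * k ^ (N + pm - pp)
      = k ^ ((N + pp - pm) + (1 + (N + pm - pp))) from by
    rw [pow_add, pow_add, pow_one, mul_assoc]]
  exact pow_congr_of_pow_eq_one hKo 2 (N - 2) _ _ arith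

theorem G2Ep (hpp : 2 ≤ pp) (hpm : 2 ≤ pm) (hq : (q ^ 2) ^ pp = 1)
    (hKo : k ^ (2*pp*pm) = 1) (hke : k * ep = q ^ 2 • (ep * k)) :
    -(-(k ^ (2*pp*pm - pm) * ep) * (k ^ (2*pp*pm - 1)) ^ (2*pp*pm - pm))
      = k ^ (2*pp*pm + pp - pm) * ep * k ^ (2*pp*pm + pm - pp) := by
  have hppN : pp ≤ 2*pp*pm := by nlinarith
  have hpmN : pm ≤ 2*pp*pm := by nlinarith
  have h1N : 1 ≤ 2*pp*pm := by nlinarith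
  have e2aux : (2*pp*pm - 1) * (2*pp*pm - pm) + (2*pp*pm - pm) = (2*pp*pm) * (2*pp*pm - pm) := by
    zify [h1N]; ring
  set N := 2*pp*pm with hN
  have e2 : (k ^ (N - 1)) ^ (N - pm) = k ^ pm := by
    refine eq_of_same_inv (b := k ^ (N - pm)) ?_ ?_
    · rw [← pow_add, show N - pm + pm = N by omega, hKo]
    · rw [← pow_mul, ← pow_add, e2aux, pow_mul, hKo, one_pow]
  rw [e2, neg_mul, neg_neg]
  simp only [mul_assoc, kp_x hke, comm_pow' hke, kmerge, smul_mul_assoc, mul_smul_comm,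
    smul_smul, ← pow_add]
  rw [show N - pm + pm = N by omega, hKo, mul_one,
    show N + pp - pm + (N + pm - pp) = N * 2 by omega, pow_mul, hKo, one_pow, mul_one]
  congr 1
  exact pow_congr_of_pow_eq_one hq 1 0 _ _ (by omega)

theorem G2Fp (hpp : 2 ≤ pp) (hpm : 2 ≤ pm) (hq : (q ^ 2) ^ pp = 1)
    (hKo : k ^ (2*pp*pm) = 1) (hkf : k * fp = (q ^ 2)⁻¹ • (fp * k)) :
    -((k ^ (2*pp*pm - 1)) ^ pm * -(fp * k ^ pm))
      = k ^ (2*pp*pm + pp - pm) * fp * k ^ (2*pp*pm + pm - pp) := by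
  have hppN : pp ≤ 2*pp*pm := by nlinarith
  have hpmN : pm ≤ 2*pp*pm := by nlinarith
  have h1N : 1 ≤ 2*pp*pm := by nlinarith
  have e1aux : (2*pp*pm - 1) * pm + pm = (2*pp*pm) * pm := by zify [h1N]; ring
  have hqiNpp : ((q ^ 2)⁻¹) ^ (2*pp*pm - pp) = 1 := by
    rw [inv_pow, show 2*pp*pm - pp = pp*(2*pm - 1) by
      zify [hppN, show 1 ≤ 2*pm by omega]; ring, pow_mul, hq, one_pow, inv_one]
  set N := 2*pp*pm with hN
  have e1 : (k ^ (N - 1)) ^ pm = k ^ (2*N - pm) := by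
    refine eq_of_same_inv (b := k ^ pm) ?_ ?_
    · rw [← pow_add, show pm + (2*N - pm) = N*2 by omega, pow_mul, hKo, one_pow]
    · rw [← pow_mul, ← pow_add, e1aux, pow_mul, hKo, one_pow]
  rw [e1, mul_neg, neg_neg]
  simp only [mul_assoc, kp_x hkf, comm_pow' hkf, kmerge, smul_mul_assoc, mul_smul_comm,
    smul_smul, ← pow_add]
  rw [show 2*N - pm + pm = N*2 by omega, pow_mul, hKo, one_pow, mul_one,
    show N + pp - pm + (N + pm - pp) = N * 2 by omega, pow_mul, hKo, one_pow, mul_one]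
  congr 1
  exact pow_congr_of_pow_eq_one hqiNpp 0 1 _ _ (by omega)

theorem G2Em (hpp : 2 ≤ pp) (hpm : 2 ≤ pm) (hr : (r ^ 2) ^ pm = 1)
    (hKo : k ^ (2*pp*pm) = 1) (hkE : k * em = r ^ 2 • (em * k)) :
    -((k ^ (2*pp*pm - 1)) ^ (2*pp*pm - pp) * -(em * k ^ (2*pp*pm - pp)))
      = k ^ (2*pp*pm + pp - pm) * em * k ^ (2*pp*pm + pm - pp) := by
  have hppN : pp ≤ 2*pp*pm := by nlinarith
  have hpmN : pm ≤ 2*pp*pm := by nlinarith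
  have h1N : 1 ≤ 2*pp*pm := by nlinarith
  have e2aux : (2*pp*pm - 1) * (2*pp*pm - pp) + (2*pp*pm - pp) = (2*pp*pm) * (2*pp*pm - pp) := by
    zify [h1N]; ring
  have hrNpm : (r ^ 2) ^ (2*pp*pm - pm) = 1 := by
    rw [show 2*pp*pm - pm = pm*(2*pp - 1) by
      zify [hpmN, show 1 ≤ 2*pp by omega]; ring, pow_mul, hr, one_pow]
  set N := 2*pp*pm with hN
  have e2 : (k ^ (N - 1)) ^ (N - pp) = k ^ pp := by
    refine eq_of_same_inv (b := k ^ (N - pp)) ?_ ?_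
    · rw [← pow_add, show N - pp + pp = N by omega, hKo]
    · rw [← pow_mul, ← pow_add, e2aux, pow_mul, hKo, one_pow]
  rw [e2, mul_neg, neg_neg]
  simp only [mul_assoc, kp_x hkE, comm_pow' hkE, kmerge, smul_mul_assoc, mul_smul_comm,
    smul_smul, ← pow_add]
  rw [show pp + (N - pp) = N by omega, hKo, mul_one,
    show N + pp - pm + (N + pm - pp) = N * 2 by omega, pow_mul, hKo, one_pow, mul_one]
  congr 1
  exact pow_congr_of_pow_eq_one hrNpm 1 0 _ _ (by omega)

theorem G2Fm (hpp : 2 ≤ pp) (hpm : 2 ≤ pm) (hr : (r ^ 2) ^ pm = 1)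
    (hKo : k ^ (2*pp*pm) = 1) (hkF : k * fm = (r ^ 2)⁻¹ • (fm * k)) :
    -(-(k ^ pp * fm) * (k ^ (2*pp*pm - 1)) ^ pp)
      = k ^ (2*pp*pm + pp - pm) * fm * k ^ (2*pp*pm + pm - pp) := by
  have hppN : pp ≤ 2*pp*pm := by nlinarith
  have hpmN : pm ≤ 2*pp*pm := by nlinarith
  have h1N : 1 ≤ 2*pp*pm := by nlinarith
  have e1aux : (2*pp*pm - 1) * pp + pp = (2*pp*pm) * pp := by zify [h1N]; ring
  have hriNpm : ((r ^ 2)⁻¹) ^ (2*pp*pm - pm) = 1 := by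
    rw [inv_pow, show 2*pp*pm - pm = pm*(2*pp - 1) by
      zify [hpmN, show 1 ≤ 2*pp by omega]; ring, pow_mul, hr, one_pow, inv_one]
  set N := 2*pp*pm with hN
  have e1 : (k ^ (N - 1)) ^ pp = k ^ (2*N - pp) := by
    refine eq_of_same_inv (b := k ^ pp) ?_ ?_
    · rw [← pow_add, show pp + (2*N - pp) = N*2 by omega, pow_mul, hKo, one_pow]
    · rw [← pow_mul, ← pow_add, e1aux, pow_mul, hKo, one_pow]
  rw [e1, neg_mul, neg_neg]
  simp only [mul_assoc, kp_x hkF, comm_pow' hkF, kmerge, smul_mul_assoc, mul_smul_comm,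
    smul_smul, ← pow_add]
  rw [show pp + (2*N - pp) = N*2 by omega, pow_mul, hKo, one_pow, mul_one,
    show N + pp - pm + (N + pm - pp) = N * 2 by omega, pow_mul, hKo, one_pow, mul_one]
  congr 1
  exact pow_congr_of_pow_eq_one hriNpm 1 0 _ _ (by omega)

end Generic5

theorem root_ne_zero (p : ℕ) : rootOfUnity p ≠ 0 := Complex.exp_ne_zero _

theorem root_sq_pow {p : ℕ} (hp : p ≠ 0) : (rootOfUnity p ^ 2) ^ p = 1 := by
  rw [← pow_mul, rootOfUnity, ← Complex.exp_nat_mul]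
  have hpc : (p : ℂ) ≠ 0 := Nat.cast_ne_zero.mpr hp
  rw [show ((2 * p : ℕ) : ℂ) * (Real.pi * Complex.I / p) = 2 * Real.pi * Complex.I by
    push_cast; field_simp]
  exact Complex.exp_two_pi_mul_I

namespace QGaux

variable (pp pm : ℕ)

theorem hKord : gen pp pm K ^ (2 * pp * pm) = 1 := by
  have h := RingQuot.mkAlgHom_rel ℂ (QGRel.KOrd (pp := pp) (pm := pm))
  simpa [gen, map_pow] using h

theorem hEpNil : gen pp pm Ep ^ pp = 0 := by
  have h := RingQuot.mkAlgHom_rel ℂ (QGRel.EpNil (pp := pp) (pm := pm))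
  simpa [gen, map_pow] using h

theorem hFpNil : gen pp pm Fp ^ pp = 0 := by
  have h := RingQuot.mkAlgHom_rel ℂ (QGRel.FpNil (pp := pp) (pm := pm))
  simpa [gen, map_pow] using h

theorem hEmNil : gen pp pm Em ^ pm = 0 := by
  have h := RingQuot.mkAlgHom_rel ℂ (QGRel.EmNil (pp := pp) (pm := pm))
  simpa [gen, map_pow] using h

theorem hFmNil : gen pp pm Fm ^ pm = 0 := by
  have h := RingQuot.mkAlgHom_rel ℂ (QGRel.FmNil (pp := pp) (pm := pm))
  simpa [gen, map_pow] using h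

theorem hKEp : gen pp pm K * gen pp pm Ep
    = (rootOfUnity pp ^ 2) • (gen pp pm Ep * gen pp pm K) := by
  have h := RingQuot.mkAlgHom_rel ℂ (QGRel.KEp (pp := pp) (pm := pm))
  rw [Algebra.smul_def]
  simpa [gen, map_mul, AlgHom.commutes] using h

theorem hKFp : gen pp pm K * gen pp pm Fp
    = ((rootOfUnity pp ^ 2)⁻¹) • (gen pp pm Fp * gen pp pm K) := by
  have h := RingQuot.mkAlgHom_rel ℂ (QGRel.KFp (pp := pp) (pm := pm))
  rw [Algebra.smul_def]
  simpa [gen, map_mul, AlgHom.commutes] using h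

theorem hKEm : gen pp pm K * gen pp pm Em
    = (rootOfUnity pm ^ 2) • (gen pp pm Em * gen pp pm K) := by
  have h := RingQuot.mkAlgHom_rel ℂ (QGRel.KEm (pp := pp) (pm := pm))
  rw [Algebra.smul_def]
  simpa [gen, map_mul, AlgHom.commutes] using h

theorem hKFm : gen pp pm K * gen pp pm Fm
    = ((rootOfUnity pm ^ 2)⁻¹) • (gen pp pm Fm * gen pp pm K) := by
  have h := RingQuot.mkAlgHom_rel ℂ (QGRel.KFm (pp := pp) (pm := pm))
  rw [Algebra.smul_def]
  simpa [gen, map_mul, AlgHom.commutes] using h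

theorem hEpEm : gen pp pm Ep * gen pp pm Em = gen pp pm Em * gen pp pm Ep := by
  have h := RingQuot.mkAlgHom_rel ℂ (QGRel.EpEm (pp := pp) (pm := pm))
  simpa [gen, map_mul] using h

theorem hFpFm : gen pp pm Fp * gen pp pm Fm = gen pp pm Fm * gen pp pm Fp := by
  have h := RingQuot.mkAlgHom_rel ℂ (QGRel.FpFm (pp := pp) (pm := pm))
  simpa [gen, map_mul] using h

theorem hEpFm : gen pp pm Ep * gen pp pm Fm = gen pp pm Fm * gen pp pm Ep := by
  have h := RingQuot.mkAlgHom_rel ℂ (QGRel.EpFm (pp := pp) (pm := pm))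
  simpa [gen, map_mul] using h

theorem hEmFp : gen pp pm Em * gen pp pm Fp = gen pp pm Fp * gen pp pm Em := by
  have h := RingQuot.mkAlgHom_rel ℂ (QGRel.EmFp (pp := pp) (pm := pm))
  simpa [gen, map_mul] using h

theorem hEpFp : gen pp pm Ep * gen pp pm Fp - gen pp pm Fp * gen pp pm Ep
    = ((rootOfUnity pp ^ pm - (rootOfUnity pp ^ pm)⁻¹)⁻¹) •
      (gen pp pm K ^ pm - gen pp pm K ^ (2 * pp * pm - pm)) := by
  have h := RingQuot.mkAlgHom_rel ℂ (QGRel.EpFp (pp := pp) (pm := pm))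
  rw [Algebra.smul_def]
  simpa [gen, map_mul, map_sub, map_pow, AlgHom.commutes] using h

theorem hEmFm : gen pp pm Em * gen pp pm Fm - gen pp pm Fm * gen pp pm Em
    = ((rootOfUnity pm ^ pp - (rootOfUnity pm ^ pp)⁻¹)⁻¹) •
      (gen pp pm K ^ pp - gen pp pm K ^ (2 * pp * pm - pp)) := by
  have h := RingQuot.mkAlgHom_rel ℂ (QGRel.EmFm (pp := pp) (pm := pm))
  rw [Algebra.smul_def]
  simpa [gen, map_mul, map_sub, map_pow, AlgHom.commutes] using h

end QGaux

open QGaux MulOpposite in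
def antipodeFree (pp pm : ℕ) : FreeAlgebra ℂ QGGen →ₐ[ℂ] (QG pp pm)ᵐᵒᵖ :=
  FreeAlgebra.lift ℂ fun x => match x with
  | Ep => op (-(gen pp pm K ^ (2*pp*pm - pm) * gen pp pm Ep))
  | Fp => op (-(gen pp pm Fp * gen pp pm K ^ pm))
  | Em => op (-(gen pp pm Em * gen pp pm K ^ (2*pp*pm - pp)))
  | Fm => op (-(gen pp pm K ^ pp * gen pp pm Fm))
  | K => op (gen pp pm K ^ (2*pp*pm - 1))


open QGaux MulOpposite in
theorem antipode_rel (pp pm : ℕ) (hpp : 2 ≤ pp) (hpm : 2 ≤ pm) :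
    ∀ ⦃a b⦄, QGRel pp pm a b → antipodeFree pp pm a = antipodeFree pp pm b := by
  intro a b r
  have hq0 : rootOfUnity pp ≠ 0 := root_ne_zero pp
  have hr0 : rootOfUnity pm ≠ 0 := root_ne_zero pm
  have hq : (rootOfUnity pp ^ 2) ^ pp = 1 := root_sq_pow (by omega)
  have hr : (rootOfUnity pm ^ 2) ^ pm = 1 := root_sq_pow (by omega)
  cases r <;>
    simp only [antipodeFree, map_mul, map_pow, map_sub, map_zero, map_one, AlgHom.commutes,
      FreeAlgebra.lift_ι_apply] <;>
    rw [← unop_inj] <;>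
    simp only [unop_mul, unop_op, MulOpposite.algebraMap_apply, unop_neg, unop_pow, unop_sub,
      unop_zero, unop_one]
  case EpNil => exact GEpNil (hKEp pp pm) (hEpNil pp pm)
  case FpNil => exact GFpNil hq0 (hKFp pp pm) (hFpNil pp pm)
  case EmNil => exact GEmNil hr0 (hKEm pp pm) (hEmNil pp pm)
  case FmNil => exact GFmNil (hKFm pp pm) (hFmNil pp pm)
  case KOrd => exact GKOrd hpp hpm (hKord pp pm)
  case KEp => exact GKEp hpp hpm hq (hKEp pp pm)
  case KFp => exact GKFp hpp hpm hq (hKFp pp pm)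
  case KEm => exact GKEm hpp hpm hr (hKEm pp pm)
  case KFm => exact GKFm hpp hpm hr (hKFm pp pm)
  case EpEm => exact GEpEm hpp hpm hq hr (hKEp pp pm) (hKEm pp pm) (hEpEm pp pm)
  case FpFm => exact GFpFm hpp hpm hq hr (hKFp pp pm) (hKFm pp pm) (hFpFm pp pm)
  case EpFm => exact GEpFm hpp hpm hq hr (hKEp pp pm) (hKFm pp pm) (hEpFm pp pm)
  case EmFp => exact GEmFp hpp hpm hq hr (hKFp pp pm) (hKEm pp pm) (hEmFp pp pm)
  case EpFp => exact GEpFp hpp hpm hq0 hq (hKord pp pm) (hKEp pp pm) (hKFp pp pm) (hEpFp pp pm)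
  case EmFm => exact GEmFm hpp hpm hr0 hr (hKord pp pm) (hKEm pp pm) (hKFm pp pm) (hEmFm pp pm)


open QGaux MulOpposite in
/-- The antipode `S` of `g_{p₊,p₋}` exists and its square is conjugation by the balancing
element `G = K^{p₊−p₋}` (powers of `K` taken modulo `K^{2p₊p₋} = 1`). -/
theorem antipode_square_balancing (pp pm : ℕ) (hpp : 2 ≤ pp) (hpm : 2 ≤ pm)
    (hco : Nat.Coprime pp pm) :
    ∃ S : QG pp pm →ₗ[ℂ] QG pp pm,
      S 1 = 1 ∧ (∀ x y : QG pp pm, S (x * y) = S y * S x) ∧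
      S (gen pp pm K) = gen pp pm K ^ (2 * pp * pm - 1) ∧
      S (gen pp pm Ep) = -(gen pp pm K ^ (2 * pp * pm - pm) * gen pp pm Ep) ∧
      S (gen pp pm Fp) = -(gen pp pm Fp * gen pp pm K ^ pm) ∧
      S (gen pp pm Em) = -(gen pp pm Em * gen pp pm K ^ (2 * pp * pm - pp)) ∧
      S (gen pp pm Fm) = -(gen pp pm K ^ pp * gen pp pm Fm) ∧
      ∀ x : QG pp pm,
        S (S x) =
          gen pp pm K ^ (2 * pp * pm + pp - pm) * x * gen pp pm K ^ (2 * pp * pm + pm - pp) := by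
  have hq : (rootOfUnity pp ^ 2) ^ pp = 1 := root_sq_pow (by omega)
  have hr : (rootOfUnity pm ^ 2) ^ pm = 1 := root_sq_pow (by omega)
  set Φ : QG pp pm →ₐ[ℂ] (QG pp pm)ᵐᵒᵖ :=
    RingQuot.liftAlgHom ℂ ⟨antipodeFree pp pm, antipode_rel pp pm hpp hpm⟩ with hΦ
  set S : QG pp pm →ₗ[ℂ] QG pp pm :=
    (MulOpposite.opLinearEquiv ℂ).symm.toLinearMap ∘ₗ Φ.toLinearMap with hS
  have hSdef : ∀ x, S x = unop (Φ x) := fun x => rfl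
  have hanti : ∀ x y : QG pp pm, S (x * y) = S y * S x := by
    intro x y; rw [hSdef, hSdef, hSdef, map_mul, unop_mul]
  have hS1 : S 1 = 1 := by rw [hSdef, map_one, unop_one]
  have hSpow : ∀ (x : QG pp pm) (n : ℕ), S (x ^ n) = S x ^ n := by
    intro x n; rw [hSdef, hSdef, map_pow, unop_pow]
  have hSalg : ∀ t : ℂ, S (algebraMap ℂ (QG pp pm) t) = algebraMap ℂ (QG pp pm) t := by
    intro t; rw [hSdef, AlgHom.commutes, MulOpposite.algebraMap_apply, unop_op]
  have hgen : ∀ x : QGGen, Φ (gen pp pm x) = antipodeFree pp pm (FreeAlgebra.ι ℂ x) := by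
    intro x
    rw [hΦ, gen]
    exact RingQuot.liftAlgHom_mkAlgHom_apply ℂ _ _ _
  have hSK : S (gen pp pm K) = gen pp pm K ^ (2 * pp * pm - 1) := by
    rw [hSdef, hgen]
    simp only [antipodeFree, FreeAlgebra.lift_ι_apply, unop_op]
  have hSEp : S (gen pp pm Ep) = -(gen pp pm K ^ (2 * pp * pm - pm) * gen pp pm Ep) := by
    rw [hSdef, hgen]
    simp only [antipodeFree, FreeAlgebra.lift_ι_apply, unop_op]
  have hSFp : S (gen pp pm Fp) = -(gen pp pm Fp * gen pp pm K ^ pm) := by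
    rw [hSdef, hgen]
    simp only [antipodeFree, FreeAlgebra.lift_ι_apply, unop_op]
  have hSEm : S (gen pp pm Em) = -(gen pp pm Em * gen pp pm K ^ (2 * pp * pm - pp)) := by
    rw [hSdef, hgen]
    simp only [antipodeFree, FreeAlgebra.lift_ι_apply, unop_op]
  have hSFm : S (gen pp pm Fm) = -(gen pp pm K ^ pp * gen pp pm Fm) := by
    rw [hSdef, hgen]
    simp only [antipodeFree, FreeAlgebra.lift_ι_apply, unop_op]
  have hpN : pp ≤ 2*pp*pm := by nlinarith
  have hmN : pm ≤ 2*pp*pm := by nlinarith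
  have hba : gen pp pm K ^ (2 * pp * pm + pm - pp) * gen pp pm K ^ (2 * pp * pm + pp - pm)
      = 1 := Gunit (hKord pp pm) (by omega)
  have hab : gen pp pm K ^ (2 * pp * pm + pp - pm) * gen pp pm K ^ (2 * pp * pm + pm - pp)
      = 1 := Gunit (hKord pp pm) (by omega)
  have key : ∀ x : QG pp pm,
      S (S x) = gen pp pm K ^ (2 * pp * pm + pp - pm) * x
        * gen pp pm K ^ (2 * pp * pm + pm - pp) := by
    have hq0 : rootOfUnity pp ≠ 0 := root_ne_zero pp
    have hr0 : rootOfUnity pm ≠ 0 := root_ne_zero pm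
    intro x
    obtain ⟨y, rfl⟩ := RingQuot.mkAlgHom_surjective ℂ (QGRel pp pm) x
    induction y using FreeAlgebra.induction with
    | grade0 t =>
      rw [AlgHom.commutes, hSalg, hSalg]
      exact (Galg hab t).symm
    | grade1 g =>
      have hg : RingQuot.mkAlgHom ℂ (QGRel pp pm) (FreeAlgebra.ι ℂ g) = gen pp pm g := rfl
      rw [hg]
      cases g with
      | K =>
        rw [hSK, hSpow, hSK]
        exact G2K hpp hpm (hKord pp pm)
      | Ep =>
        rw [hSEp, map_neg, hanti, hSpow, hSK, hSEp]
        exact G2Ep hpp hpm hq (hKord pp pm) (hKEp pp pm)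
      | Fp =>
        rw [hSFp, map_neg, hanti, hSpow, hSK, hSFp]
        exact G2Fp hpp hpm hq (hKord pp pm) (hKFp pp pm)
      | Em =>
        rw [hSEm, map_neg, hanti, hSpow, hSK, hSEm]
        exact G2Em hpp hpm hr (hKord pp pm) (hKEm pp pm)
      | Fm =>
        rw [hSFm, map_neg, hanti, hSpow, hSK, hSFm]
        exact G2Fm hpp hpm hr (hKord pp pm) (hKFm pp pm)
    | mul a b ha hb =>
      rw [map_mul, hanti, hanti, ha, hb]
      exact Gclosure hba
    | add a b ha hb =>
      rw [map_add, map_add, map_add, ha, hb]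
      exact Gadd
  exact ⟨S, hS1, hanti, hSK, hSEp, hSFp, hSEm, hSFm, key⟩
end
end

section
/- The algebra H presented by generators e, f, k with relations e^{p₊} = 0, f^{p₋} = 0, k^{4p₊p₋} = 1, e·f = f·e, k·e = q₊·e·k, k·f = q₋^{-1}·f·k is a ℂ-vector space of dimension 4·p₊²·p₋², and the monomials k^j·e^m·f^n with 0 ≤ j ≤ 4p₊p₋−1, 0 ≤ m ≤ p₊−1, 0 ≤ n ≤ p₋−1 form a ℂ-basis of H (PBW basis of the two-screening algebra). -/
noncomputable section

/-- Generators of the two-screening algebra `H`. -/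
inductive HGen : Type
  | e | f | k

open FreeAlgebra HGen

/-- The defining relations of the two-screening algebra `H`:
`e^{p₊} = 0`, `f^{p₋} = 0`, `k^{4p₊p₋} = 1`, `ef = fe`, `ke = q₊·ek`, `kf = q₋⁻¹·fk`. -/
inductive HRel (pp pm : ℕ) : FreeAlgebra ℂ HGen → FreeAlgebra ℂ HGen → Prop
  | eNil : HRel pp pm (ι ℂ e ^ pp) 0
  | fNil : HRel pp pm (ι ℂ f ^ pm) 0
  | kOrd : HRel pp pm (ι ℂ k ^ (4 * pp * pm)) 1
  | ef : HRel pp pm (ι ℂ e * ι ℂ f) (ι ℂ f * ι ℂ e)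
  | ke : HRel pp pm (ι ℂ k * ι ℂ e)
      (algebraMap ℂ (FreeAlgebra ℂ HGen) (rootOfUnity pp) * (ι ℂ e * ι ℂ k))
  | kf : HRel pp pm (ι ℂ k * ι ℂ f)
      (algebraMap ℂ (FreeAlgebra ℂ HGen) ((rootOfUnity pm)⁻¹) * (ι ℂ f * ι ℂ k))

/-- The two-screening algebra `H`. -/
abbrev HAlg (pp pm : ℕ) : Type := RingQuot (HRel pp pm)

/-- The image of a generator in `H`. -/
def hgen (pp pm : ℕ) (x : HGen) : HAlg pp pm :=
  RingQuot.mkAlgHom ℂ (HRel pp pm) (ι ℂ x)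

namespace PBW

lemma root_ne_zero (p : ℕ) : rootOfUnity p ≠ 0 := Complex.exp_ne_zero _

lemma root_pow_two_mul (p : ℕ) (hp : p ≠ 0) : rootOfUnity p ^ (2 * p) = 1 := by
  rw [rootOfUnity, ← Complex.exp_nat_mul]
  rw [show ((2 * p : ℕ) : ℂ) * (Real.pi * Complex.I / p) = 2 * Real.pi * Complex.I by
    have : (p : ℂ) ≠ 0 := Nat.cast_ne_zero.2 hp
    field_simp; norm_cast; ring]
  exact Complex.exp_two_pi_mul_I

end PBW
namespace PBW
open Fin.NatCast Fin.CommRing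
variable (pp pm : ℕ) [NeZero pp] [NeZero pm] [NeZero (4 * pp * pm)]

abbrev Idx := Fin (4 * pp * pm) × Fin pp × Fin pm
abbrev V := Idx pp pm → ℂ

def Kmap : V pp pm →ₗ[ℂ] V pp pm where
  toFun v := fun i =>
    rootOfUnity pp ^ (i.2.1 : ℕ) * (rootOfUnity pm)⁻¹ ^ (i.2.2 : ℕ) * v (i.1 - 1, i.2.1, i.2.2)
  map_add' u v := by funext i; simp; ring
  map_smul' c v := by funext i; simp; ring

def Emap : V pp pm →ₗ[ℂ] V pp pm where
  toFun v := fun i =>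
    if h : (i.2.1 : ℕ) = 0 then 0
    else v (i.1, ⟨(i.2.1 : ℕ) - 1, lt_of_le_of_lt (Nat.sub_le _ _) i.2.1.isLt⟩, i.2.2)
  map_add' u v := by funext i; by_cases h : (i.2.1 : ℕ) = 0 <;> simp [Fin.val_eq_zero_iff] at h <;> simp [h]
  map_smul' c v := by funext i; by_cases h : (i.2.1 : ℕ) = 0 <;> simp [Fin.val_eq_zero_iff] at h <;> simp [h]

def Fmap : V pp pm →ₗ[ℂ] V pp pm where
  toFun v := fun i =>
    if h : (i.2.2 : ℕ) = 0 then 0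
    else v (i.1, i.2.1, ⟨(i.2.2 : ℕ) - 1, lt_of_le_of_lt (Nat.sub_le _ _) i.2.2.isLt⟩)
  map_add' u v := by funext i; by_cases h : (i.2.2 : ℕ) = 0 <;> simp [Fin.val_eq_zero_iff] at h <;> simp [h]
  map_smul' c v := by funext i; by_cases h : (i.2.2 : ℕ) = 0 <;> simp [Fin.val_eq_zero_iff] at h <;> simp [h]


lemma Kmap_apply (v : V pp pm) (i : Idx pp pm) :
    Kmap pp pm v i =
      rootOfUnity pp ^ (i.2.1 : ℕ) * (rootOfUnity pm)⁻¹ ^ (i.2.2 : ℕ) * v (i.1 - 1, i.2.1, i.2.2) := rfl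

lemma Emap_apply (v : V pp pm) (i : Idx pp pm) :
    Emap pp pm v i =
      if h : (i.2.1 : ℕ) = 0 then 0
      else v (i.1, ⟨(i.2.1 : ℕ) - 1, lt_of_le_of_lt (Nat.sub_le _ _) i.2.1.isLt⟩, i.2.2) := rfl

lemma Fmap_apply (v : V pp pm) (i : Idx pp pm) :
    Fmap pp pm v i =
      if h : (i.2.2 : ℕ) = 0 then 0
      else v (i.1, i.2.1, ⟨(i.2.2 : ℕ) - 1, lt_of_le_of_lt (Nat.sub_le _ _) i.2.2.isLt⟩) := rfl

lemma Emap_pow (t : ℕ) (v : V pp pm) (i : Idx pp pm) :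
    ((Emap pp pm ^ t) v) i =
      if h : t ≤ (i.2.1 : ℕ) then
        v (i.1, ⟨(i.2.1 : ℕ) - t, lt_of_le_of_lt (Nat.sub_le _ _) i.2.1.isLt⟩, i.2.2)
      else 0 := by
  induction t generalizing v i with
  | zero => simp
  | succ t ih =>
    rw [pow_succ', Module.End.mul_apply]
    obtain ⟨j, m, n⟩ := i
    rw [Emap_apply]
    dsimp only
    by_cases h0 : (m : ℕ) = 0
    · rw [dif_pos h0, dif_neg (by omega)]
    · rw [dif_neg h0, ih]
      dsimp only
      split_ifs with h1 h2
      · have hv : (m:ℕ) - 1 - t = (m:ℕ) - (t+1) := by omega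
        simp only [hv]
      · exact (h2 (by omega)).elim
      · exact (h1 (by omega)).elim
      · rfl

lemma Fmap_pow (t : ℕ) (v : V pp pm) (i : Idx pp pm) :
    ((Fmap pp pm ^ t) v) i =
      if h : t ≤ (i.2.2 : ℕ) then
        v (i.1, i.2.1, ⟨(i.2.2 : ℕ) - t, lt_of_le_of_lt (Nat.sub_le _ _) i.2.2.isLt⟩)
      else 0 := by
  induction t generalizing v i with
  | zero => simp
  | succ t ih =>
    rw [pow_succ', Module.End.mul_apply]
    obtain ⟨j, m, n⟩ := i
    rw [Fmap_apply]
    dsimp only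
    by_cases h0 : (n : ℕ) = 0
    · rw [dif_pos h0, dif_neg (by omega)]
    · rw [dif_neg h0, ih]
      dsimp only
      split_ifs with h1 h2
      · have hv : (n:ℕ) - 1 - t = (n:ℕ) - (t+1) := by omega
        simp only [hv]
      · exact (h2 (by omega)).elim
      · exact (h1 (by omega)).elim
      · rfl

lemma Kmap_pow (t : ℕ) (v : V pp pm) (i : Idx pp pm) :
    ((Kmap pp pm ^ t) v) i =
      (rootOfUnity pp ^ (i.2.1 : ℕ) * (rootOfUnity pm)⁻¹ ^ (i.2.2 : ℕ)) ^ t *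
        v (i.1 - (t : Fin (4 * pp * pm)), i.2.1, i.2.2) := by
  induction t generalizing v i with
  | zero => simp
  | succ t ih =>
    rw [pow_succ', Module.End.mul_apply]
    obtain ⟨j, m, n⟩ := i
    rw [Kmap_apply, ih]
    rw [show j - 1 - (t : Fin (4*pp*pm)) = j - ((t+1 : ℕ) : Fin (4*pp*pm)) by
      push_cast; ring]
    ring

end PBW
namespace PBW
open Fin.NatCast Fin.CommRing
variable (pp pm : ℕ) [NeZero pp] [NeZero pm] [NeZero (4 * pp * pm)]

lemma E_nil : Emap pp pm ^ pp = 0 := by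
  refine LinearMap.ext fun v => funext fun i => ?_
  rw [Emap_pow]
  exact dif_neg (by omega)

lemma F_nil : Fmap pp pm ^ pm = 0 := by
  refine LinearMap.ext fun v => funext fun i => ?_
  rw [Fmap_pow]
  exact dif_neg (by omega)

lemma K_ord : Kmap pp pm ^ (4 * pp * pm) = 1 := by
  refine LinearMap.ext fun v => funext fun i => ?_
  rw [Kmap_pow]
  rw [Fin.natCast_self, sub_zero]
  rw [mul_pow, ← pow_mul, ← pow_mul]
  rw [show (i.2.1 : ℕ) * (4 * pp * pm) = 2 * pp * (2 * pm * (i.2.1:ℕ)) by ring,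
      pow_mul, root_pow_two_mul pp (NeZero.ne pp), one_pow,
      show (i.2.2 : ℕ) * (4 * pp * pm) = 2 * pm * (2 * pp * (i.2.2:ℕ)) by ring,
      pow_mul, inv_pow, root_pow_two_mul pm (NeZero.ne pm), inv_one, one_pow]
  simp

lemma EF_comm : Emap pp pm * Fmap pp pm = Fmap pp pm * Emap pp pm := by
  refine LinearMap.ext fun v => funext fun i => ?_
  simp only [Module.End.mul_apply, Emap_apply, Fmap_apply]
  obtain ⟨j, m, n⟩ := i
  dsimp only
  split_ifs <;> rfl

lemma KE_rel : Kmap pp pm * Emap pp pm = rootOfUnity pp • (Emap pp pm * Kmap pp pm) := by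
  refine LinearMap.ext fun v => funext fun i => ?_
  obtain ⟨j, m, n⟩ := i
  simp only [Module.End.mul_apply, LinearMap.smul_apply, Kmap_apply, Emap_apply, Pi.smul_apply,
    smul_eq_mul]
  by_cases h0 : (m : ℕ) = 0
  · simp [h0]
  · rw [dif_neg h0, dif_neg h0]
    rw [show rootOfUnity pp ^ (m:ℕ) = rootOfUnity pp ^ ((m:ℕ)-1) * rootOfUnity pp from by
      rw [← pow_succ]; congr 1; omega]
    ring

lemma KF_rel : Kmap pp pm * Fmap pp pm = (rootOfUnity pm)⁻¹ • (Fmap pp pm * Kmap pp pm) := by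
  refine LinearMap.ext fun v => funext fun i => ?_
  obtain ⟨j, m, n⟩ := i
  simp only [Module.End.mul_apply, LinearMap.smul_apply, Kmap_apply, Fmap_apply, Pi.smul_apply,
    smul_eq_mul]
  by_cases h0 : (n : ℕ) = 0
  · simp [h0]
  · rw [dif_neg h0, dif_neg h0]
    rw [show (rootOfUnity pm)⁻¹ ^ (n:ℕ) = (rootOfUnity pm)⁻¹ ^ ((n:ℕ)-1) * (rootOfUnity pm)⁻¹ from by
      rw [← pow_succ]; congr 1; omega]
    ring

end PBW

namespace PBW
variable (pp pm : ℕ) [NeZero pp] [NeZero pm] [NeZero (4 * pp * pm)]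

def gens : HGen → Module.End ℂ (V pp pm)
  | .e => Emap pp pm
  | .f => Fmap pp pm
  | .k => Kmap pp pm

def repAux : FreeAlgebra ℂ HGen →ₐ[ℂ] Module.End ℂ (V pp pm) :=
  FreeAlgebra.lift ℂ (gens pp pm)

lemma repAux_rel : ∀ ⦃x y⦄, HRel pp pm x y → repAux pp pm x = repAux pp pm y := by
  intro x y h
  cases h with
  | eNil => rw [map_pow, map_zero, repAux, FreeAlgebra.lift_ι_apply]; exact E_nil pp pm
  | fNil => rw [map_pow, map_zero, repAux, FreeAlgebra.lift_ι_apply]; exact F_nil pp pm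
  | kOrd => rw [map_pow, map_one, repAux, FreeAlgebra.lift_ι_apply]; exact K_ord pp pm
  | ef => rw [map_mul, map_mul, repAux, FreeAlgebra.lift_ι_apply, FreeAlgebra.lift_ι_apply]
          exact EF_comm pp pm
  | ke =>
      rw [map_mul, map_mul, map_mul, AlgHom.commutes, ← Algebra.smul_def, repAux,
        FreeAlgebra.lift_ι_apply, FreeAlgebra.lift_ι_apply]
      exact KE_rel pp pm
  | kf =>
      rw [map_mul, map_mul, map_mul, AlgHom.commutes, ← Algebra.smul_def, repAux,
        FreeAlgebra.lift_ι_apply, FreeAlgebra.lift_ι_apply]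
      exact KF_rel pp pm

def rep : HAlg pp pm →ₐ[ℂ] Module.End ℂ (V pp pm) :=
  RingQuot.liftAlgHom ℂ ⟨repAux pp pm, repAux_rel pp pm⟩

lemma rep_hgen (x : HGen) : rep pp pm (hgen pp pm x) = gens pp pm x := by
  rw [hgen, rep, RingQuot.liftAlgHom_mkAlgHom_apply, repAux, FreeAlgebra.lift_ι_apply]

end PBW
namespace PBW
open Fin.NatCast Fin.CommRing
variable (pp pm : ℕ) [NeZero pp] [NeZero pm] [NeZero (4 * pp * pm)]

def delta : V pp pm := Pi.single ((0 : Fin (4 * pp * pm)), (0 : Fin pp), (0 : Fin pm)) 1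

lemma L_mono (j : Fin (4 * pp * pm)) (m : Fin pp) (n : Fin pm) :
    (Kmap pp pm ^ (j : ℕ) * Emap pp pm ^ (m : ℕ) * Fmap pp pm ^ (n : ℕ)) (delta pp pm) =
      ((rootOfUnity pp ^ (m : ℕ) * (rootOfUnity pm)⁻¹ ^ (n : ℕ)) ^ (j : ℕ)) •
        (Pi.single (j, m, n) (1 : ℂ) : V pp pm) := by
  funext i
  obtain ⟨ji, mi, ni⟩ := i
  rw [Module.End.mul_apply, Module.End.mul_apply, Kmap_pow]
  simp only [Emap_pow, Fmap_pow, delta, Pi.single_apply, Pi.smul_apply, smul_eq_mul]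
  by_cases hi : (ji, mi, ni) = (j, m, n)
  · rw [Prod.mk.injEq, Prod.mk.injEq] at hi
    obtain ⟨h1, h2, h3⟩ := hi
    subst h1; subst h2; subst h3
    rw [dif_pos le_rfl, dif_pos le_rfl, if_pos (by
      refine Prod.ext ?_ (Prod.ext ?_ ?_)
      · simp [Fin.cast_val_eq_self]
      · exact Fin.ext (by simp)
      · exact Fin.ext (by simp)), if_pos rfl]
  · rw [if_neg hi, mul_zero]
    by_cases h1 : (m : ℕ) ≤ (mi : ℕ)
    · rw [dif_pos h1]
      by_cases h2 : (n : ℕ) ≤ (ni : ℕ)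
      · rw [dif_pos h2, if_neg, mul_zero]
        intro hq
        rw [Prod.mk.injEq, Prod.mk.injEq] at hq
        obtain ⟨hq1, hq2, hq3⟩ := hq
        refine hi ?_
        have e1 : ji = j := by rwa [sub_eq_zero, Fin.cast_val_eq_self] at hq1
        have e2 : mi = m := Fin.ext (by have := Fin.val_eq_of_eq hq2; simp at this; omega)
        have e3 : ni = n := Fin.ext (by have := Fin.val_eq_of_eq hq3; simp at this; omega)
        rw [e1, e2, e3]
      · rw [dif_neg h2, mul_zero]
    · rw [dif_neg h1, mul_zero]
end PBW
namespace PBW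
open Fin.NatCast Fin.CommRing
variable (pp pm : ℕ) [NeZero pp] [NeZero pm] [NeZero (4 * pp * pm)]

def Lmap : HAlg pp pm →ₗ[ℂ] V pp pm where
  toFun x := rep pp pm x (delta pp pm)
  map_add' x y := by simp only [map_add]; rfl
  map_smul' c x := by simp only [map_smul]; rfl

lemma Lmap_mono (j : Fin (4 * pp * pm)) (m : Fin pp) (n : Fin pm) :
    Lmap pp pm (hgen pp pm .k ^ (j : ℕ) * hgen pp pm .e ^ (m : ℕ) * hgen pp pm .f ^ (n : ℕ)) =
      ((rootOfUnity pp ^ (m : ℕ) * (rootOfUnity pm)⁻¹ ^ (n : ℕ)) ^ (j : ℕ)) •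
        (Pi.single (j, m, n) (1 : ℂ) : V pp pm) := by
  show rep pp pm _ (delta pp pm) = _
  rw [map_mul, map_mul, map_pow, map_pow, map_pow, rep_hgen, rep_hgen, rep_hgen]
  rw [show gens pp pm .k = Kmap pp pm from rfl, show gens pp pm .e = Emap pp pm from rfl,
    show gens pp pm .f = Fmap pp pm from rfl]
  exact L_mono pp pm j m n

lemma li : LinearIndependent ℂ (fun jmn : Fin (4 * pp * pm) × Fin pp × Fin pm =>
    hgen pp pm .k ^ (jmn.1 : ℕ) * hgen pp pm .e ^ (jmn.2.1 : ℕ) *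
      hgen pp pm .f ^ (jmn.2.2 : ℕ)) := by
  apply LinearIndependent.of_comp (Lmap pp pm)
  have hw : ∀ jmn : Idx pp pm,
      (rootOfUnity pp ^ (jmn.2.1 : ℕ) * (rootOfUnity pm)⁻¹ ^ (jmn.2.2 : ℕ)) ^ (jmn.1 : ℕ) ≠ 0 :=
    fun jmn => pow_ne_zero _ (mul_ne_zero (pow_ne_zero _ (root_ne_zero pp))
      (pow_ne_zero _ (inv_ne_zero (root_ne_zero pm))))
  have base := (Pi.basisFun ℂ (Idx pp pm)).linearIndependent.units_smul
    (fun jmn => Units.mk0 _ (hw jmn))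
  convert base using 1
  funext jmn
  obtain ⟨j, m, n⟩ := jmn
  simp only [Function.comp_apply, Pi.smul_apply', Pi.basisFun_apply, Units.smul_mk0]
  exact Lmap_mono pp pm j m n

end PBW
namespace PBW

lemma pow_comm_smul_base {A : Type*} [Ring A] [Algebra ℂ A] {X K : A} {c : ℂ}
    (h : X * K = c • (K * X)) (b : ℕ) :
    X * K ^ b = c ^ b • (K ^ b * X) := by
  induction b with
  | zero => simp
  | succ b ih =>
    rw [pow_succ, ← mul_assoc, ih, smul_mul_assoc, mul_assoc, h, mul_smul_comm, smul_smul,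
      ← pow_succ, ← mul_assoc, ← pow_succ]

lemma pow_comm_smul {A : Type*} [Ring A] [Algebra ℂ A] {X K : A} {c : ℂ}
    (h : X * K = c • (K * X)) (a b : ℕ) :
    X ^ a * K ^ b = c ^ (a * b) • (K ^ b * X ^ a) := by
  induction a with
  | zero => simp
  | succ a ih =>
    rw [pow_succ, mul_assoc, pow_comm_smul_base h b, mul_smul_comm, ← mul_assoc, ih,
      smul_mul_assoc, smul_smul, mul_assoc, ← pow_add]
    congr 1
    ring

variable (pp pm : ℕ) [NeZero pp] [NeZero pm] [NeZero (4 * pp * pm)]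

lemma hgen_E_nil : hgen pp pm .e ^ pp = 0 := by
  have := RingQuot.mkAlgHom_rel ℂ (HRel.eNil (pp := pp) (pm := pm))
  rwa [map_pow, map_zero] at this

lemma hgen_F_nil : hgen pp pm .f ^ pm = 0 := by
  have := RingQuot.mkAlgHom_rel ℂ (HRel.fNil (pp := pp) (pm := pm))
  rwa [map_pow, map_zero] at this

lemma hgen_K_ord : hgen pp pm .k ^ (4 * pp * pm) = 1 := by
  have := RingQuot.mkAlgHom_rel ℂ (HRel.kOrd (pp := pp) (pm := pm))
  rwa [map_pow, map_one] at this

lemma hgen_EF : hgen pp pm .e * hgen pp pm .f = hgen pp pm .f * hgen pp pm .e := by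
  have := RingQuot.mkAlgHom_rel ℂ (HRel.ef (pp := pp) (pm := pm))
  rwa [map_mul, map_mul] at this

lemma hgen_KE : hgen pp pm .k * hgen pp pm .e =
    rootOfUnity pp • (hgen pp pm .e * hgen pp pm .k) := by
  have := RingQuot.mkAlgHom_rel ℂ (HRel.ke (pp := pp) (pm := pm))
  rwa [map_mul, map_mul, map_mul, AlgHom.commutes, ← Algebra.smul_def] at this

lemma hgen_KF : hgen pp pm .k * hgen pp pm .f =
    (rootOfUnity pm)⁻¹ • (hgen pp pm .f * hgen pp pm .k) := by
  have := RingQuot.mkAlgHom_rel ℂ (HRel.kf (pp := pp) (pm := pm))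
  rwa [map_mul, map_mul, map_mul, AlgHom.commutes, ← Algebra.smul_def] at this

lemma hgen_EK : hgen pp pm .e * hgen pp pm .k =
    (rootOfUnity pp)⁻¹ • (hgen pp pm .k * hgen pp pm .e) := by
  rw [hgen_KE, smul_smul, inv_mul_cancel₀ (root_ne_zero pp), one_smul]

lemma hgen_FK : hgen pp pm .f * hgen pp pm .k =
    rootOfUnity pm • (hgen pp pm .k * hgen pp pm .f) := by
  rw [hgen_KF, smul_smul, mul_inv_cancel₀ (root_ne_zero pm), one_smul]

end PBW
namespace PBW
open Fin.NatCast Fin.CommRing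
variable (pp pm : ℕ) [NeZero pp] [NeZero pm] [NeZero (4 * pp * pm)]

abbrev Bfam : Idx pp pm → HAlg pp pm := fun jmn =>
  hgen pp pm .k ^ (jmn.1 : ℕ) * hgen pp pm .e ^ (jmn.2.1 : ℕ) * hgen pp pm .f ^ (jmn.2.2 : ℕ)

lemma mono_mem (a b c : ℕ) :
    hgen pp pm .k ^ a * hgen pp pm .e ^ b * hgen pp pm .f ^ c ∈
      Submodule.span ℂ (Set.range (Bfam pp pm)) := by
  by_cases hb : pp ≤ b
  · rw [show b = pp + (b - pp) by omega, pow_add, hgen_E_nil, zero_mul, mul_zero, zero_mul]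
    exact zero_mem _
  · by_cases hc : pm ≤ c
    · rw [show c = pm + (c - pm) by omega, pow_add, hgen_F_nil, zero_mul, mul_zero]
      exact zero_mem _
    · have hN : 0 < 4 * pp * pm := Nat.pos_of_ne_zero (NeZero.ne _)
      have hk : hgen pp pm .k ^ a = hgen pp pm .k ^ (a % (4 * pp * pm)) := by
        conv_lhs => rw [show a = 4 * pp * pm * (a / (4 * pp * pm)) + a % (4 * pp * pm) from
          (Nat.div_add_mod a (4 * pp * pm)).symm ▸ rfl]
        rw [pow_add, pow_mul, hgen_K_ord, one_pow, one_mul]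
      rw [hk]
      exact Submodule.subset_span
        ⟨(⟨a % (4 * pp * pm), Nat.mod_lt _ hN⟩, ⟨b, by omega⟩, ⟨c, by omega⟩), rfl⟩

lemma mono_mul (a b c a' b' c' : ℕ) :
    (hgen pp pm .k ^ a * hgen pp pm .e ^ b * hgen pp pm .f ^ c) *
      (hgen pp pm .k ^ a' * hgen pp pm .e ^ b' * hgen pp pm .f ^ c') =
    (rootOfUnity pm ^ (c * a') * (rootOfUnity pp)⁻¹ ^ (b * a')) •
      (hgen pp pm .k ^ (a + a') * hgen pp pm .e ^ (b + b') * hgen pp pm .f ^ (c + c')) := by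
  set K := hgen pp pm .k
  set E := hgen pp pm .e
  set F := hgen pp pm .f
  have hswap1 : ∀ x : HAlg pp pm, F ^ c * (K ^ a' * x) =
      rootOfUnity pm ^ (c * a') • (K ^ a' * (F ^ c * x)) := fun x => by
    rw [← mul_assoc, pow_comm_smul (hgen_FK pp pm), smul_mul_assoc, mul_assoc]
  have hswap2 : ∀ x : HAlg pp pm, E ^ b * (K ^ a' * x) =
      (rootOfUnity pp)⁻¹ ^ (b * a') • (K ^ a' * (E ^ b * x)) := fun x => by
    rw [← mul_assoc, pow_comm_smul (hgen_EK pp pm), smul_mul_assoc, mul_assoc]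
  have hswap3 : ∀ x : HAlg pp pm, F ^ c * (E ^ b' * x) = E ^ b' * (F ^ c * x) := fun x => by
    rw [← mul_assoc, ← mul_assoc,
      ((Commute.pow_pow (hgen_EF pp pm).symm c b') : F ^ c * E ^ b' = E ^ b' * F ^ c)]
  conv_rhs => rw [pow_add, pow_add, pow_add]
  simp only [mul_assoc]
  rw [hswap1, mul_smul_comm, mul_smul_comm, hswap2, mul_smul_comm, hswap3, smul_smul]

open Pointwise in
lemma span_top : Submodule.span ℂ (Set.range (Bfam pp pm)) = ⊤ := by
  set S := Submodule.span ℂ (Set.range (Bfam pp pm)) with hS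
  have hone : (1 : HAlg pp pm) ∈ S := by
    have := mono_mem pp pm 0 0 0
    simpa using this
  have hmul : ∀ x y : HAlg pp pm, x ∈ S → y ∈ S → x * y ∈ S := by
    have hss : Set.range (Bfam pp pm) * Set.range (Bfam pp pm) ⊆ (S : Set (HAlg pp pm)) := by
      rintro z ⟨x, ⟨i, rfl⟩, y, ⟨i', rfl⟩, rfl⟩
      obtain ⟨a, b, cc⟩ := i
      obtain ⟨a', b', c'⟩ := i'
      show Bfam pp pm (a, b, cc) * Bfam pp pm (a', b', c') ∈ (S : Set (HAlg pp pm))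
      rw [show Bfam pp pm (a, b, cc) = hgen pp pm .k ^ (a : ℕ) * hgen pp pm .e ^ (b : ℕ) *
        hgen pp pm .f ^ (cc : ℕ) from rfl, show Bfam pp pm (a', b', c') =
        hgen pp pm .k ^ (a' : ℕ) * hgen pp pm .e ^ (b' : ℕ) * hgen pp pm .f ^ (c' : ℕ) from rfl,
        mono_mul]
      exact S.smul_mem _ (mono_mem pp pm _ _ _)
    intro x y hx hy
    have : S * S ≤ S := by
      rw [hS, Submodule.span_mul_span]
      exact Submodule.span_le.2 hss
    exact this (Submodule.mul_mem_mul hx hy)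
  let T : Subalgebra ℂ (HAlg pp pm) := S.toSubalgebra hone hmul
  have hk : hgen pp pm .k ∈ T := by
    have := mono_mem pp pm 1 0 0
    simpa [T, Submodule.mem_toSubalgebra] using this
  have he : hgen pp pm .e ∈ T := by
    have := mono_mem pp pm 0 1 0
    simpa [T, Submodule.mem_toSubalgebra] using this
  have hf : hgen pp pm .f ∈ T := by
    have := mono_mem pp pm 0 0 1
    simpa [T, Submodule.mem_toSubalgebra] using this
  rw [eq_top_iff]
  rintro x -
  obtain ⟨y, rfl⟩ := RingQuot.mkAlgHom_surjective ℂ (HRel pp pm) x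
  show RingQuot.mkAlgHom ℂ (HRel pp pm) y ∈ T
  induction y with
  | grade0 r => rw [AlgHom.commutes]; exact T.algebraMap_mem r
  | grade1 g => cases g with
    | e => exact he
    | f => exact hf
    | k => exact hk
  | mul x y hx hy => rw [map_mul]; exact T.mul_mem hx hy
  | add x y hx hy => rw [map_add]; exact T.add_mem hx hy

end PBW


/-- `H` has dimension `4p₊²p₋²`, with PBW basis `k^j e^m f^n`. -/
theorem pbw_basis (pp pm : ℕ) (hpp : 2 ≤ pp) (hpm : 2 ≤ pm) (hco : Nat.Coprime pp pm) :
    FiniteDimensional ℂ (HAlg pp pm) ∧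
    Module.finrank ℂ (HAlg pp pm) = 4 * pp ^ 2 * pm ^ 2 ∧
    LinearIndependent ℂ (fun jmn : Fin (4 * pp * pm) × Fin pp × Fin pm =>
      hgen pp pm k ^ (jmn.1 : ℕ) * hgen pp pm e ^ (jmn.2.1 : ℕ) *
        hgen pp pm f ^ (jmn.2.2 : ℕ)) ∧
    Submodule.span ℂ
        (Set.range (fun jmn : Fin (4 * pp * pm) × Fin pp × Fin pm =>
          hgen pp pm k ^ (jmn.1 : ℕ) * hgen pp pm e ^ (jmn.2.1 : ℕ) *
            hgen pp pm f ^ (jmn.2.2 : ℕ))) = ⊤ := by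
  haveI : NeZero pp := ⟨by omega⟩
  haveI : NeZero pm := ⟨by omega⟩
  haveI : NeZero (4 * pp * pm) :=
    ⟨Nat.mul_ne_zero (Nat.mul_ne_zero (by norm_num) (by omega)) (by omega)⟩
  have hli := PBW.li pp pm
  have hsp := PBW.span_top pp pm
  have b : Module.Basis (PBW.Idx pp pm) ℂ (HAlg pp pm) := Module.Basis.mk hli (le_of_eq hsp.symm)
  refine ⟨Module.Basis.finiteDimensional_of_finite b, ?_, hli, hsp⟩
  rw [Module.finrank_eq_card_basis b, Fintype.card_prod, Fintype.card_prod,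
    Fintype.card_fin, Fintype.card_fin, Fintype.card_fin]
  ring
end
end

section
/- Let I be the ideal of ℂ[x,y] generated by the three polynomials U_{2p₊+1}(x) − U_{2p₊−1}(x) − 2, U_{2p₋+1}(y) − U_{2p₋−1}(y) − 2, and U_{p₊+1}(x) − U_{p₊−1}(x) − U_{p₋+1}(y) + U_{p₋−1}(y). Then the quotient ring ℂ[x,y]/I is a ℂ-vector space of dimension 2·p₊·p₋, and the images of the 2p₊p₋ polynomials P^+_{r,r'} := U_r(x)·U_{r'}(y) and P^−_{r,r'} := ((1/2)·U_{p₊+r}(x) − (1/2)·U_{p₊−r}(x))·U_{r'}(y), for 1 ≤ r ≤ p₊ and 1 ≤ r' ≤ p₋, form a ℂ-basis of ℂ[x,y]/I. (This quotient is the Grothendieck ring of g_{p₊,p₋}, with P^±_{r,r'} representing the simple modules X^±_{r,r'}.) -/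
noncomputable section

/-- Chebyshev polynomials of the second kind: `U 0 = 0`, `U 1 = 1`,
`U (s+2) = X·U (s+1) − U s` (so `U_s(2 cos t) = sin(st)/sin t`). -/
def chebU : ℕ → Polynomial ℂ
  | 0 => 0
  | 1 => 1
  | (n + 2) => Polynomial.X * chebU (n + 1) - chebU n

/-- `U_n(x)` as an element of `ℂ[x,y]`. -/
def Ux (n : ℕ) : MvPolynomial (Fin 2) ℂ :=
  Polynomial.aeval (MvPolynomial.X (0 : Fin 2)) (chebU n)

/-- `U_n(y)` as an element of `ℂ[x,y]`. -/
def Uy (n : ℕ) : MvPolynomial (Fin 2) ℂ :=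
  Polynomial.aeval (MvPolynomial.X (1 : Fin 2)) (chebU n)

/-- The ideal `I` of `ℂ[x,y]` defining the Grothendieck ring of `g_{p₊,p₋}`. -/
def GrIdeal (pp pm : ℕ) : Ideal (MvPolynomial (Fin 2) ℂ) :=
  Ideal.span
    {Ux (2 * pp + 1) - Ux (2 * pp - 1) - 2,
     Uy (2 * pm + 1) - Uy (2 * pm - 1) - 2,
     Ux (pp + 1) - Ux (pp - 1) - Uy (pm + 1) + Uy (pm - 1)}

/-- The polynomials `P^±_{r,r'}` representing the simple modules `X^±_{r,r'}`;
`true` stands for the sign `+` and `false` for `−`. -/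
def Pbasis (pp : ℕ) (α : Bool) (r r' : ℕ) : MvPolynomial (Fin 2) ℂ :=
  if α then Ux r * Uy r'
  else (MvPolynomial.C (1 / 2 : ℂ) * Ux (pp + r) - MvPolynomial.C (1 / 2 : ℂ) * Ux (pp - r)) *
    Uy r'

namespace GRaux

open Polynomial Polynomial.Chebyshev

lemma chebU_eq : ∀ n : ℕ, chebU n = (U ℂ ((n : ℤ) - 1)).comp (C (2⁻¹ : ℂ) * X)
  | 0 => by simp [chebU]
  | 1 => by simp [chebU]
  | (n + 2) => by
    have e : ((n + 2 : ℕ) : ℤ) - 1 = ((n : ℤ) - 1) + 2 := by push_cast; ring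
    have e1 : ((n + 1 : ℕ) : ℤ) - 1 = ((n : ℤ) - 1) + 1 := by push_cast; ring
    rw [chebU, chebU_eq (n + 1), chebU_eq n, e, e1, U_add_two]
    simp only [sub_comp, mul_comp, ofNat_comp, X_comp]
    have hC : (C (2⁻¹ : ℂ)) * 2 = 1 := by
      rw [show ((2 : ℂ[X])) = Polynomial.C 2 from (map_ofNat Polynomial.C 2).symm, ← Polynomial.C_mul]; norm_num
    linear_combination (-(X * (U ℂ ((n : ℤ) - 1 + 1)).comp (C (2⁻¹ : ℂ) * X))) * hC

lemma two_T (n : ℤ) : 2 * T ℂ n = U ℂ n - U ℂ (n - 2) := by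
  have h1 := U_add_two ℂ (n - 2)
  have h2 := T_eq_U_sub_X_mul_U ℂ n
  rw [show n - 2 + 2 = n by ring, show n - 2 + 1 = n - 1 by ring] at h1
  linear_combination 2 * h2 + h1

/-- `2 T_m U_k = U_{k+m} + U_{k-m}` -/
lemma mul_U (m k : ℤ) : 2 * T ℂ m * U ℂ k = U ℂ (k + m) + U ℂ (k - m) := by
  induction m using Polynomial.Chebyshev.induct with
  | zero => simp [two_mul]
  | one => rw [T_one]; linear_combination -U_add_one ℂ k
  | add_two m ih1 ih2 =>
    have h₁ := U_add_two ℂ (k + m)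
    have h₂ := U_sub_two ℂ (k - m)
    have h₃ := T_add_two ℂ m
    linear_combination (norm := ring_nf) 2 * U ℂ k * h₃ + 2 * (X : ℂ[X]) * ih1 - ih2 - h₁ - h₂
  | neg_add_one m ih1 ih2 =>
    have h₁ := U_add_two ℂ (k - m - 1)
    have h₂ := U_add_two ℂ (k + m - 1)
    have h₃ := T_add_two ℂ (-m - 1)
    rw [show (-m : ℤ) - 1 + 2 = -m + 1 by ring, show (-m : ℤ) - 1 + 1 = -m by ring] at h₃
    linear_combination (norm := ring_nf) 2 * U ℂ k * h₃ + 2 * (X : ℂ[X]) * ih1 - ih2 - h₁ - h₂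


/-- The normalized Chebyshev `T`: `tch n (2 cos θ) = 2 cos (n θ)` for `n ≥ 1`. -/
def tch (n : ℕ) : Polynomial ℂ := chebU (n + 1) - chebU (n - 1)

lemma tch_eq (n : ℕ) (hn : 1 ≤ n) :
    tch n = (2 * T ℂ (n : ℤ)).comp (C (2⁻¹ : ℂ) * X) := by
  have e : ((n - 1 : ℕ) : ℤ) - 1 = (n : ℤ) - 2 := by omega
  rw [tch, chebU_eq, chebU_eq, e, two_T, sub_comp,
    show ((n + 1 : ℕ) : ℤ) - 1 = (n : ℤ) by push_cast; ring]

lemma tch_sq (p : ℕ) (hp : 1 ≤ p) : tch (2 * p) = tch p ^ 2 - C 2 := by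
  rw [tch_eq _ hp, tch_eq _ (by omega : 1 ≤ 2 * p)]
  have h := T_mul_T ℂ (p : ℤ) (p : ℤ)
  rw [sub_self, T_zero] at h
  have : (2 * T ℂ ((2 * p : ℕ) : ℤ)) = (2 * T ℂ (p : ℤ)) ^ 2 - 2 := by
    push_cast
    rw [show ((p : ℤ) + p) = 2 * p by ring] at h
    linear_combination -2 * h
  rw [this, sub_comp, pow_comp, ofNat_comp]
  norm_num
  exact (map_ofNat Polynomial.C 2).symm

lemma cheb_prod (p r : ℕ) (hp : 1 ≤ p) (hr : r ≤ p) :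
    chebU (p + r) - chebU (p - r) = tch p * chebU r := by
  have h := mul_U (p : ℤ) ((r : ℤ) - 1)
  have hneg : U ℂ ((r : ℤ) - 1 - p) = -U ℂ (((p - r : ℕ) : ℤ) - 1) := by
    have e : ((r : ℤ) - 1 - p) = -(((p - r : ℕ) : ℤ) - 1) - 2 := by
      push_cast [hr]; ring
    rw [e, U_neg_sub_two]
  rw [hneg] at h
  have e2 : ((r : ℤ) - 1 + p) = ((p + r : ℕ) : ℤ) - 1 := by push_cast; ring
  rw [e2] at h
  rw [chebU_eq (p + r), chebU_eq (p - r), chebU_eq r, tch_eq p hp, ← mul_comp, h,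
    add_comp, neg_comp]
  ring

lemma chebU_monic : ∀ n : ℕ, (chebU (n + 1)).Monic ∧ (chebU (n + 1)).degree = n
  | 0 => by constructor <;> simp [chebU, monic_one]
  | 1 => by
    have : chebU 2 = X := by rw [chebU]; simp [chebU]
    rw [this]; exact ⟨monic_X, degree_X⟩
  | (n + 2) => by
    obtain ⟨h1m, h1d⟩ := chebU_monic (n + 1)
    obtain ⟨h0m, h0d⟩ := chebU_monic n
    have hXm : (X * chebU (n + 2)).Monic := (monic_X).mul h1m
    have hXd : (X * chebU (n + 2)).degree = ((n + 2 : ℕ) : WithBot ℕ) := by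
      rw [degree_mul, degree_X, h1d]; push_cast; ring
    have hlt : (chebU (n + 1)).degree < (X * chebU (n + 2)).degree := by
      rw [hXd, h0d]; exact_mod_cast Nat.lt_succ_of_lt (Nat.lt_succ_self n)
    constructor
    · rw [chebU]
      exact hXm.sub_of_left hlt
    · rw [chebU, degree_sub_eq_left_of_degree_lt hlt, hXd]

lemma chebU_degree_lt (n : ℕ) : (chebU n).degree < (n : WithBot ℕ) := by
  cases n with
  | zero => simp [chebU]
  | succ n =>
    rw [(chebU_monic n).2]
    exact_mod_cast Nat.lt_succ_self n

lemma tch_monic (n : ℕ) (hn : 1 ≤ n) : (tch n).Monic ∧ (tch n).degree = n := by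
  have h1 := chebU_monic n
  have hlt : (chebU (n - 1)).degree < (chebU (n + 1)).degree := by
    rw [h1.2]
    exact lt_of_lt_of_le (chebU_degree_lt (n - 1)) (by exact_mod_cast Nat.sub_le n 1)
  exact ⟨h1.1.sub_of_left hlt, by rw [tch, degree_sub_eq_left_of_degree_lt hlt, h1.2]⟩

lemma tch_add_C_monic (n : ℕ) (hn : 1 ≤ n) (c : ℂ) :
    (tch n + C c).Monic ∧ (tch n + C c).natDegree = n := by
  obtain ⟨hm, hd⟩ := tch_monic n hn
  have hlt : (C c).degree < (tch n).degree := by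
    rw [hd]
    exact lt_of_le_of_lt degree_C_le (by exact_mod_cast Nat.pos_of_ne_zero (by omega))
  constructor
  · exact hm.add_of_left hlt
  · have := degree_add_eq_left_of_degree_lt hlt
    rw [natDegree_eq_of_degree_eq_some (by rw [this, hd])]


/- ### Part 2: quotients by (f(x), g(y)) -/

open Polynomial

abbrev Rxy := MvPolynomial (Fin 2) ℂ

def x0 : Rxy := MvPolynomial.X 0
def x1 : Rxy := MvPolynomial.X 1

/-- The ideal `(f(x), g(y))`. -/
def Jfg (f g : Polynomial ℂ) : Ideal Rxy :=
  Ideal.span {Polynomial.aeval x0 f, Polynomial.aeval x1 g}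

lemma mk_C_mul (J : Ideal Rxy) (c : ℂ) (z : Rxy) :
    Ideal.Quotient.mk J (MvPolynomial.C c * z) = c • Ideal.Quotient.mk J z := by
  rw [map_mul,
    show (Ideal.Quotient.mk J) (MvPolynomial.C c) = algebraMap ℂ (Rxy ⧸ J) c from rfl,
    ← Algebra.smul_def]

section
variable {f g : Polynomial ℂ}

/-- the monomial family in the quotient -/
def mfam (f g : Polynomial ℂ) (k : Fin f.natDegree × Fin g.natDegree) :
    Rxy ⧸ Jfg f g :=
  Ideal.Quotient.mk (Jfg f g) (x0 ^ (k.1 : ℕ) * x1 ^ (k.2 : ℕ))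

lemma sub_pow_natDegree_lt (hf : f.Monic) (hm : 1 ≤ f.natDegree) :
    (f - Polynomial.X ^ f.natDegree).natDegree < f.natDegree := by
  rcases eq_or_ne (f - Polynomial.X ^ f.natDegree) 0 with h | h
  · rw [h, natDegree_zero]; omega
  · have hd := degree_sub_lt
      (by rw [degree_X_pow, degree_eq_natDegree hf.ne_zero] :
        f.degree = (Polynomial.X ^ f.natDegree).degree)
      hf.ne_zero
      (by rw [leadingCoeff_X_pow, hf.leadingCoeff] :
        f.leadingCoeff = (Polynomial.X ^ f.natDegree).leadingCoeff)
    rw [degree_eq_natDegree hf.ne_zero] at hd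
    exact (natDegree_lt_iff_degree_lt h).mpr hd

lemma monomial_mem_span_aux (hf : f.Monic) (hg : g.Monic)
    (hm : 1 ≤ f.natDegree) (hn : 1 ≤ g.natDegree) (N : ℕ) :
    ∀ i j : ℕ, i + j ≤ N → Ideal.Quotient.mk (Jfg f g) (x0 ^ i * x1 ^ j)
      ∈ Submodule.span ℂ (Set.range (mfam f g)) := by
  induction N using Nat.strong_induction_on with
  | _ N IH =>
  intro i j hij
  by_cases hi : f.natDegree ≤ i
  · -- reduce in x
    set m := f.natDegree with hmdef
    set W : Rxy := x0 ^ (i - m) * x1 ^ j with hW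
    have key : x0 ^ i * x1 ^ j
        = W * Polynomial.aeval x0 f - W * (Polynomial.aeval x0 f - x0 ^ m) := by
      have h2 : W * Polynomial.aeval x0 f - W * (Polynomial.aeval x0 f - x0 ^ m)
          = x0 ^ (i - m) * x0 ^ m * x1 ^ j := by ring
      rw [h2, ← pow_add, Nat.sub_add_cancel hi]
    have hr : Polynomial.aeval x0 f - x0 ^ m
        = Polynomial.aeval x0 (f - Polynomial.X ^ m) := by
      rw [map_sub, map_pow, Polynomial.aeval_X]
    set r : Polynomial ℂ := f - Polynomial.X ^ m with hrdef
    have hrsum : r = ∑ k ∈ Finset.range m, Polynomial.monomial k (r.coeff k) :=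
      as_sum_range' r m (sub_pow_natDegree_lt hf hm)
    have expand : W * Polynomial.aeval x0 r
        = ∑ k ∈ Finset.range m, MvPolynomial.C (r.coeff k) * (x0 ^ (i - m + k) * x1 ^ j) := by
      conv_lhs => rw [hrsum]
      rw [map_sum, Finset.mul_sum]
      refine Finset.sum_congr rfl fun k hk => ?_
      rw [Polynomial.aeval_monomial, MvPolynomial.algebraMap_eq, pow_add]
      ring
    rw [key, hr, map_sub]
    have h0 : Ideal.Quotient.mk (Jfg f g) (W * Polynomial.aeval x0 f) = 0 := by
      rw [Ideal.Quotient.eq_zero_iff_mem]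
      exact Ideal.mul_mem_left _ _ (Ideal.subset_span (Set.mem_insert _ _))
    rw [h0, zero_sub, expand, map_sum]
    refine Submodule.neg_mem _ (Submodule.sum_mem _ fun k hk => ?_)
    rw [mk_C_mul]
    have hk' := Finset.mem_range.mp hk
    exact Submodule.smul_mem _ _ (IH (i - m + k + j) (by omega) _ _ le_rfl)
  · by_cases hj : g.natDegree ≤ j
    · -- reduce in y
      set n := g.natDegree with hndef
      set W : Rxy := x0 ^ i * x1 ^ (j - n) with hW
      have key : x0 ^ i * x1 ^ j
          = W * Polynomial.aeval x1 g - W * (Polynomial.aeval x1 g - x1 ^ n) := by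
        have h2 : W * Polynomial.aeval x1 g - W * (Polynomial.aeval x1 g - x1 ^ n)
            = x0 ^ i * (x1 ^ (j - n) * x1 ^ n) := by ring
        rw [h2, ← pow_add, Nat.sub_add_cancel hj]
      have hr : Polynomial.aeval x1 g - x1 ^ n
          = Polynomial.aeval x1 (g - Polynomial.X ^ n) := by
        rw [map_sub, map_pow, Polynomial.aeval_X]
      set r : Polynomial ℂ := g - Polynomial.X ^ n with hrdef
      have hrsum : r = ∑ k ∈ Finset.range n, Polynomial.monomial k (r.coeff k) :=
        as_sum_range' r n (sub_pow_natDegree_lt hg hn)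
      have expand : W * Polynomial.aeval x1 r
          = ∑ k ∈ Finset.range n, MvPolynomial.C (r.coeff k) * (x0 ^ i * x1 ^ (j - n + k)) := by
        conv_lhs => rw [hrsum]
        rw [map_sum, Finset.mul_sum]
        refine Finset.sum_congr rfl fun k hk => ?_
        rw [Polynomial.aeval_monomial, MvPolynomial.algebraMap_eq, pow_add]
        ring
      rw [key, hr, map_sub]
      have h0 : Ideal.Quotient.mk (Jfg f g) (W * Polynomial.aeval x1 g) = 0 := by
        rw [Ideal.Quotient.eq_zero_iff_mem]
        exact Ideal.mul_mem_left _ _ (Ideal.subset_span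
          (Set.mem_insert_iff.mpr (Or.inr rfl)))
      rw [h0, zero_sub, expand, map_sum]
      refine Submodule.neg_mem _ (Submodule.sum_mem _ fun k hk => ?_)
      rw [mk_C_mul]
      have hk' := Finset.mem_range.mp hk
      exact Submodule.smul_mem _ _ (IH (i + (j - n + k)) (by omega) _ _ le_rfl)
    · exact Submodule.subset_span
        ⟨(⟨i, by omega⟩, ⟨j, by omega⟩), rfl⟩

lemma monomial_mem_span (hf : f.Monic) (hg : g.Monic)
    (hm : 1 ≤ f.natDegree) (hn : 1 ≤ g.natDegree) (i j : ℕ) :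
    Ideal.Quotient.mk (Jfg f g) (x0 ^ i * x1 ^ j)
      ∈ Submodule.span ℂ (Set.range (mfam f g)) :=
  monomial_mem_span_aux hf hg hm hn (i + j) i j le_rfl

lemma span_mfam_top (hf : f.Monic) (hg : g.Monic)
    (hm : 1 ≤ f.natDegree) (hn : 1 ≤ g.natDegree) : Submodule.span ℂ (Set.range (mfam f g)) = ⊤ := by
  rw [eq_top_iff]
  rintro z -
  obtain ⟨P, rfl⟩ := Ideal.Quotient.mk_surjective z
  rw [← MvPolynomial.support_sum_monomial_coeff P, map_sum]
  refine Submodule.sum_mem _ fun d hd => ?_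
  have hmon : (MvPolynomial.monomial d) (MvPolynomial.coeff d P)
      = MvPolynomial.C (MvPolynomial.coeff d P) * (x0 ^ (d 0) * x1 ^ (d 1)) := by
    rw [MvPolynomial.monomial_eq]
    congr 1
    rw [Finsupp.prod_fintype _ _ (fun i => pow_zero _), Fin.prod_univ_two]
    rfl
  rw [hmon, mk_C_mul]
  exact Submodule.smul_mem _ _ (monomial_mem_span hf hg hm hn _ _)

end

open Polynomial

/-- evaluation into `ℂ[x][y]` -/
def Ebig : Rxy →ₐ[ℂ] Polynomial (Polynomial ℂ) :=
  MvPolynomial.aeval (fun i : Fin 2 =>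
    if i = 0 then (Polynomial.C Polynomial.X) else Polynomial.X)

lemma Ebig_x0 : Ebig x0 = Polynomial.C Polynomial.X := by
  simp [Ebig, x0]

lemma Ebig_x1 : Ebig x1 = Polynomial.X := by
  simp [Ebig, x1]

lemma aeval_CX (f : Polynomial ℂ) :
    Polynomial.aeval (Polynomial.C Polynomial.X : Polynomial (Polynomial ℂ)) f
      = Polynomial.C f := by
  induction f using Polynomial.induction_on' with
  | add p q hp hq => simp [hp, hq]
  | monomial k c =>
    simp only [aeval_monomial, map_monomial]
    rw [show (algebraMap ℂ (Polynomial (Polynomial ℂ))) c = Polynomial.C (Polynomial.C c)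
        from rfl, ← Polynomial.C_pow, ← map_mul, C_mul_X_pow_eq_monomial]

lemma aeval_Xout (g : Polynomial ℂ) :
    Polynomial.aeval (Polynomial.X : Polynomial (Polynomial ℂ)) g
      = g.map (Polynomial.C : ℂ →+* Polynomial ℂ) := by
  induction g using Polynomial.induction_on' with
  | add p q hp hq => simp [hp, hq]
  | monomial k c =>
    simp only [aeval_monomial, Polynomial.map_monomial]
    rw [show (algebraMap ℂ (Polynomial (Polynomial ℂ))) c = Polynomial.C (Polynomial.C c)
        from rfl, C_mul_X_pow_eq_monomial]


/-- coefficient-extraction functionals on `ℂ[x,y]` -/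
def Lmap (f g : Polynomial ℂ) (i j : ℕ) : Rxy →ₗ[ℂ] ℂ :=
  (Polynomial.lcoeff ℂ i) ∘ₗ
    (Polynomial.modByMonicHom f) ∘ₗ
      (LinearMap.restrictScalars ℂ
        ((Polynomial.lcoeff (Polynomial ℂ) j) ∘ₗ
          (Polynomial.modByMonicHom (g.map (Polynomial.C : ℂ →+* Polynomial ℂ))))) ∘ₗ
        Ebig.toLinearMap

lemma Lmap_apply (f g : Polynomial ℂ) (i j : ℕ) (P : Rxy) :
    Lmap f g i j P = (((Ebig P %ₘ g.map Polynomial.C).coeff j) %ₘ f).coeff i := rfl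

lemma Lmap_vanish {f g : Polynomial ℂ} (hf : f.Monic) (hg : g.Monic) (i j : ℕ)
    {P : Rxy} (hP : P ∈ Jfg f g) : Lmap f g i j P = 0 := by
  rw [Jfg, Ideal.mem_span_pair] at hP
  obtain ⟨u, v, huv⟩ := hP
  rw [← huv, map_add]
  have h1 : Lmap f g i j (u * Polynomial.aeval x0 f) = 0 := by
    rw [Lmap_apply, map_mul, ← Polynomial.aeval_algHom_apply, Ebig_x0, aeval_CX,
      mul_comm, ← Polynomial.smul_eq_C_mul,
      show (f • Ebig u) %ₘ (g.map Polynomial.C)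
          = f • (Ebig u %ₘ (g.map Polynomial.C)) from
        (Polynomial.modByMonicHom (g.map Polynomial.C)).map_smul f (Ebig u),
      Polynomial.coeff_smul, smul_eq_mul, Polynomial.self_mul_modByMonic hf,
      Polynomial.coeff_zero]
  have h2 : Lmap f g i j (v * Polynomial.aeval x1 g) = 0 := by
    rw [Lmap_apply, map_mul, ← Polynomial.aeval_algHom_apply, Ebig_x1, aeval_Xout,
      Polynomial.mul_self_modByMonic (hg.map Polynomial.C),
      Polynomial.coeff_zero, Polynomial.zero_modByMonic, Polynomial.coeff_zero]
  rw [h1, h2, add_zero]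

lemma Lmap_monomial {f g : Polynomial ℂ} (hf : f.Monic) (hg : g.Monic)
    (i j a b : ℕ) (ha : a < f.natDegree) (hb : b < g.natDegree) :
    Lmap f g i j (x0 ^ a * x1 ^ b) = if i = a ∧ j = b then 1 else 0 := by
  have hgC : (g.map (Polynomial.C : ℂ →+* Polynomial ℂ)).Monic := hg.map _
  rw [Lmap_apply, map_mul, map_pow, map_pow, Ebig_x0, Ebig_x1,
    ← Polynomial.C_pow]
  have hdeg : (Polynomial.C (Polynomial.X ^ a : Polynomial ℂ) *
      Polynomial.X ^ b).degree < (g.map (Polynomial.C : ℂ →+* Polynomial ℂ)).degree := by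
    rw [Polynomial.degree_map_eq_of_injective (Polynomial.C_injective),
      Polynomial.degree_eq_natDegree hg.ne_zero, Polynomial.degree_mul,
      Polynomial.degree_C (pow_ne_zero a Polynomial.X_ne_zero),
      Polynomial.degree_X_pow, zero_add]
    exact_mod_cast hb
  rw [(Polynomial.modByMonic_eq_self_iff hgC).mpr hdeg, Polynomial.coeff_C_mul,
    Polynomial.coeff_X_pow]
  by_cases hjb : j = b
  · subst hjb
    have hdf : (Polynomial.X ^ a : Polynomial ℂ).degree < f.degree := by
      rw [Polynomial.degree_eq_natDegree hf.ne_zero, Polynomial.degree_X_pow]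
      exact_mod_cast ha
    rw [if_pos rfl, mul_one, (Polynomial.modByMonic_eq_self_iff hf).mpr hdf,
      Polynomial.coeff_X_pow]
    by_cases hia : i = a <;> simp [hia]
  · simp only [if_neg hjb, mul_zero, Polynomial.zero_modByMonic, Polynomial.coeff_zero]
    simp [hjb]

lemma mfam_linearIndependent {f g : Polynomial ℂ} (hf : f.Monic) (hg : g.Monic) :
    LinearIndependent ℂ (mfam f g) := by
  rw [Fintype.linearIndependent_iff]
  intro c hc k
  have hmem : (∑ t : Fin f.natDegree × Fin g.natDegree,
      c t • (x0 ^ (t.1 : ℕ) * x1 ^ (t.2 : ℕ))) ∈ Jfg f g := by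
    rw [← Ideal.Quotient.eq_zero_iff_mem, map_sum, ← hc]
    refine Finset.sum_congr rfl fun t _ => ?_
    rw [MvPolynomial.smul_eq_C_mul, mk_C_mul]
    rfl
  have hv := Lmap_vanish hf hg (k.1 : ℕ) (k.2 : ℕ) hmem
  rw [map_sum] at hv
  have : ∀ t : Fin f.natDegree × Fin g.natDegree,
      Lmap f g (k.1 : ℕ) (k.2 : ℕ) (c t • (x0 ^ (t.1 : ℕ) * x1 ^ (t.2 : ℕ)))
        = if t = k then c t else 0 := by
    intro t
    rw [map_smul, Lmap_monomial hf hg _ _ _ _ t.1.isLt t.2.isLt, smul_eq_mul]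
    by_cases htk : t = k
    · subst htk; simp
    · have : ¬((k.1 : ℕ) = (t.1 : ℕ) ∧ (k.2 : ℕ) = (t.2 : ℕ)) := by
        intro ⟨h1, h2⟩
        exact htk (Prod.ext (Fin.ext h1.symm) (Fin.ext h2.symm))
      simp [this, htk]
  rw [Finset.sum_congr rfl fun t _ => this t, Finset.sum_ite_eq' Finset.univ k] at hv
  simpa using hv


/-- basis of monomials for `ℂ[x,y]/(f(x),g(y))` -/
def mbasis {f g : Polynomial ℂ} (hf : f.Monic) (hg : g.Monic)
    (hm : 1 ≤ f.natDegree) (hn : 1 ≤ g.natDegree) :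
    Module.Basis (Fin f.natDegree × Fin g.natDegree) ℂ (Rxy ⧸ Jfg f g) :=
  Module.Basis.mk (mfam_linearIndependent hf hg) (span_mfam_top hf hg hm hn).ge

lemma finiteDimensional_quot_Jfg {f g : Polynomial ℂ} (hf : f.Monic) (hg : g.Monic)
    (hm : 1 ≤ f.natDegree) (hn : 1 ≤ g.natDegree) :
    FiniteDimensional ℂ (Rxy ⧸ Jfg f g) :=
  Module.Finite.of_basis (mbasis hf hg hm hn)

lemma finrank_quot_Jfg {f g : Polynomial ℂ} (hf : f.Monic) (hg : g.Monic)
    (hm : 1 ≤ f.natDegree) (hn : 1 ≤ g.natDegree) :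
    Module.finrank ℂ (Rxy ⧸ Jfg f g) = f.natDegree * g.natDegree := by
  rw [Module.finrank_eq_card_basis (mbasis hf hg hm hn)]
  simp

/-- powers of `X` lie in the span of the Chebyshev polynomials -/
lemma pow_mem_span_chebU (i : ℕ) : (Polynomial.X : Polynomial ℂ) ^ i ∈
    Submodule.span ℂ (Set.range fun r : Fin (i + 1) => chebU ((r : ℕ) + 1)) := by
  induction i using Nat.strong_induction_on with
  | _ i IH =>
  rcases Nat.eq_zero_or_pos i with h0 | h0
  · subst h0
    rw [pow_zero, show (1 : Polynomial ℂ) = chebU 1 from rfl]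
    exact Submodule.subset_span ⟨⟨0, by omega⟩, rfl⟩
  · have hmon := (chebU_monic i).1
    have hnat : (chebU (i + 1)).natDegree = i :=
      natDegree_eq_of_degree_eq_some (chebU_monic i).2
    have hqd : (chebU (i + 1) - Polynomial.X ^ i).natDegree < i := by
      have := sub_pow_natDegree_lt hmon (by omega)
      rwa [hnat] at this
    have hrepr : (Polynomial.X : Polynomial ℂ) ^ i
        = chebU (i + 1) - (chebU (i + 1) - Polynomial.X ^ i) := by ring
    rw [hrepr]
    refine Submodule.sub_mem _ (Submodule.subset_span ⟨⟨i, by omega⟩, rfl⟩) ?_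
    rw [as_sum_range' _ i hqd]
    refine Submodule.sum_mem _ fun k hk => ?_
    have hk' := Finset.mem_range.mp hk
    rw [← Polynomial.smul_X_eq_monomial]
    refine Submodule.smul_mem _ _ ?_
    refine Submodule.span_mono ?_ (IH k hk')
    rintro _ ⟨r, rfl⟩
    exact ⟨⟨(r : ℕ), by omega⟩, rfl⟩

/-- monomial classes lie in the span of Chebyshev-product classes (any ideal `J`) -/
lemma mk_pow_mem_span_U (J : Ideal Rxy) {p q : ℕ} {i j : ℕ} (hi : i < p) (hj : j < q) :
    Ideal.Quotient.mk J (x0 ^ i * x1 ^ j) ∈ Submodule.span ℂ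
      (Set.range fun k : Fin p × Fin q => Ideal.Quotient.mk J
        (Ux ((k.1 : ℕ) + 1) * Uy ((k.2 : ℕ) + 1))) := by
  obtain ⟨c, hc⟩ := (Submodule.mem_span_range_iff_exists_fun ℂ).mp (pow_mem_span_chebU i)
  obtain ⟨d, hd⟩ := (Submodule.mem_span_range_iff_exists_fun ℂ).mp (pow_mem_span_chebU j)
  have hx : (x0 : Rxy) ^ i = ∑ r : Fin (i + 1), c r • Polynomial.aeval x0 (chebU ((r : ℕ) + 1)) := by
    have := congrArg (Polynomial.aeval x0 : Polynomial ℂ →ₐ[ℂ] Rxy) hc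
    rw [map_sum, map_pow, Polynomial.aeval_X] at this
    rw [← this]
    exact Finset.sum_congr rfl fun r _ => by rw [map_smul]
  have hy : (x1 : Rxy) ^ j = ∑ s : Fin (j + 1), d s • Polynomial.aeval x1 (chebU ((s : ℕ) + 1)) := by
    have := congrArg (Polynomial.aeval x1 : Polynomial ℂ →ₐ[ℂ] Rxy) hd
    rw [map_sum, map_pow, Polynomial.aeval_X] at this
    rw [← this]
    exact Finset.sum_congr rfl fun s _ => by rw [map_smul]
  rw [hx, hy, Finset.sum_mul_sum, ← Ideal.Quotient.mkₐ_eq_mk ℂ J, map_sum]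
  refine Submodule.sum_mem _ fun r _ => ?_
  rw [map_sum]
  refine Submodule.sum_mem _ fun s _ => ?_
  rw [smul_mul_smul_comm, map_smul]
  refine Submodule.smul_mem _ _ (Submodule.subset_span ?_)
  exact ⟨(⟨(r : ℕ), by omega⟩, ⟨(s : ℕ), by omega⟩), rfl⟩

/-- the Chebyshev-product classes span the quotient -/
lemma span_U_top {f g : Polynomial ℂ} (hf : f.Monic) (hg : g.Monic)
    {p q : ℕ} (hp : f.natDegree = p) (hq : g.natDegree = q)
    (hp1 : 1 ≤ p) (hq1 : 1 ≤ q) :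
    Submodule.span ℂ
      (Set.range fun k : Fin p × Fin q => Ideal.Quotient.mk (Jfg f g)
        (Ux ((k.1 : ℕ) + 1) * Uy ((k.2 : ℕ) + 1))) = ⊤ := by
  rw [eq_top_iff, ← span_mfam_top hf hg (by omega) (by omega)]
  rw [Submodule.span_le]
  rintro _ ⟨k, rfl⟩
  exact mk_pow_mem_span_U (Jfg f g) (by rw [← hp]; exact k.1.isLt)
    (by rw [← hq]; exact k.2.isLt)


lemma tch_sub_two (n : ℕ) (hn : 1 ≤ n) :
    (tch n - 2).Monic ∧ (tch n - 2).natDegree = n := by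
  have h := tch_add_C_monic n hn (-2)
  have e : tch n + C (-2) = tch n - 2 := by rw [map_neg, map_ofNat]; ring
  rwa [e] at h

lemma tch_plus_two (n : ℕ) (hn : 1 ≤ n) :
    (tch n + 2).Monic ∧ (tch n + 2).natDegree = n := by
  have h := tch_add_C_monic n hn 2
  rwa [map_ofNat] at h

lemma tch_two_mul_factor (n : ℕ) (hn : 1 ≤ n) :
    tch (2 * n) - 2 = (tch n - 2) * (tch n + 2) := by
  rw [tch_sq n hn, map_ofNat]
  ring

end GRaux


namespace GRmain

open GRaux Polynomial

variable (pp pm : ℕ)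

/-- `t_{p₊}(x)` -/
def tA : Rxy := Polynomial.aeval x0 (tch pp)
/-- `t_{p₋}(y)` -/
def tB : Rxy := Polynomial.aeval x1 (tch pm)

/-- the ideal `(t_{p₊}(x) - 2, t_{p₋}(y) - 2)` -/
def Jp : Ideal Rxy := Jfg (tch pp - 2) (tch pm - 2)
/-- the ideal `(t_{p₊}(x) + 2, t_{p₋}(y) + 2)` -/
def Jm : Ideal Rxy := Jfg (tch pp + 2) (tch pm + 2)

lemma Ux_eq (n : ℕ) : Ux n = Polynomial.aeval x0 (chebU n) := rfl
lemma Uy_eq (n : ℕ) : Uy n = Polynomial.aeval x1 (chebU n) := rfl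

lemma aeval_x0_two : Polynomial.aeval x0 ((2 : Polynomial ℂ)) = (2 : Rxy) := by
  rw [map_ofNat]

lemma Jp_eq : Jp pp pm = Ideal.span {tA pp - 2, tB pm - 2} := by
  rw [Jp, Jfg, tA, tB, map_sub, map_sub, map_ofNat, map_ofNat]

lemma Jm_eq : Jm pp pm = Ideal.span {tA pp + 2, tB pm + 2} := by
  rw [Jm, Jfg, tA, tB, map_add, map_add, map_ofNat, map_ofNat]

lemma gen1_eq (hpp : 1 ≤ pp) :
    Ux (2 * pp + 1) - Ux (2 * pp - 1) - 2 = (tA pp - 2) * (tA pp + 2) := by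
  have h1 : Ux (2 * pp + 1) - Ux (2 * pp - 1) - 2
      = Polynomial.aeval x0 (tch (2 * pp) - 2) := by
    rw [map_sub, map_ofNat, tch, map_sub]
    rfl
  rw [h1, tch_two_mul_factor pp hpp, map_mul, map_sub, map_add, map_ofNat]
  rfl

lemma gen2_eq (hpm : 1 ≤ pm) :
    Uy (2 * pm + 1) - Uy (2 * pm - 1) - 2 = (tB pm - 2) * (tB pm + 2) := by
  have h1 : Uy (2 * pm + 1) - Uy (2 * pm - 1) - 2
      = Polynomial.aeval x1 (tch (2 * pm) - 2) := by
    rw [map_sub, map_ofNat, tch, map_sub]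
    rfl
  rw [h1, tch_two_mul_factor pm hpm, map_mul, map_sub, map_add, map_ofNat]
  rfl

lemma gen3_eq : Ux (pp + 1) - Ux (pp - 1) - Uy (pm + 1) + Uy (pm - 1)
    = tA pp - tB pm := by
  rw [tA, tB, tch, tch, map_sub, map_sub]
  rw [Ux_eq, Ux_eq, Uy_eq, Uy_eq]
  ring

lemma haJp : tA pp - 2 ∈ Jp pp pm := by
  rw [Jp_eq]; exact Ideal.subset_span (Set.mem_insert _ _)

lemma hbJp : tB pm - 2 ∈ Jp pp pm := by
  rw [Jp_eq]; exact Ideal.subset_span (Set.mem_insert_iff.mpr (Or.inr rfl))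

lemma haJm : tA pp + 2 ∈ Jm pp pm := by
  rw [Jm_eq]; exact Ideal.subset_span (Set.mem_insert _ _)

lemma hbJm : tB pm + 2 ∈ Jm pp pm := by
  rw [Jm_eq]; exact Ideal.subset_span (Set.mem_insert_iff.mpr (Or.inr rfl))

lemma sup_Jp_Jm : Jp pp pm ⊔ Jm pp pm = ⊤ := by
  rw [Ideal.eq_top_iff_one]
  have h4 : ((4 : Rxy)) ∈ Jp pp pm ⊔ Jm pp pm := by
    have : ((4 : Rxy)) = (tA pp + 2) - (tA pp - 2) := by ring
    rw [this]
    exact sub_mem (Submodule.mem_sup_right (haJm pp pm))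
      (Submodule.mem_sup_left (haJp pp pm))
  have := Ideal.mul_mem_left _ (MvPolynomial.C (4⁻¹ : ℂ)) h4
  have he : MvPolynomial.C (4⁻¹ : ℂ) * (4 : Rxy) = 1 := by
    rw [show ((4 : Rxy)) = MvPolynomial.C (4 : ℂ) from (map_ofNat _ 4).symm, ← map_mul]
    norm_num
  rwa [he] at this

lemma grIdeal_eq_inf (hpp : 1 ≤ pp) (hpm : 1 ≤ pm) :
    GrIdeal pp pm = Jp pp pm ⊓ Jm pp pm := by
  refine le_antisymm ?_ ?_
  · rw [GrIdeal, Ideal.span_le]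
    rintro x hx
    simp only [Set.mem_insert_iff, Set.mem_singleton_iff] at hx
    rcases hx with rfl | rfl | rfl
    · rw [gen1_eq pp hpp]
      exact Submodule.mem_inf.mpr
        ⟨Ideal.mul_mem_right _ _ (haJp pp pm), Ideal.mul_mem_left _ _ (haJm pp pm)⟩
    · rw [gen2_eq pm hpm]
      exact Submodule.mem_inf.mpr
        ⟨Ideal.mul_mem_right _ _ (hbJp pp pm), Ideal.mul_mem_left _ _ (hbJm pp pm)⟩
    · rw [gen3_eq]
      refine Submodule.mem_inf.mpr ⟨?_, ?_⟩
      · rw [show tA pp - tB pm = (tA pp - 2) - (tB pm - 2) by ring]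
        exact sub_mem (haJp pp pm) (hbJp pp pm)
      · rw [show tA pp - tB pm = (tA pp + 2) - (tB pm + 2) by ring]
        exact sub_mem (haJm pp pm) (hbJm pp pm)
  · rw [← Ideal.mul_eq_inf_of_coprime (sup_Jp_Jm pp pm), Ideal.mul_le]
    intro r hr s hs
    have h11 : (tA pp - 2) * (tA pp + 2) ∈ GrIdeal pp pm := by
      rw [← gen1_eq pp hpp]
      exact Ideal.subset_span (Set.mem_insert _ _)
    have h22 : (tB pm - 2) * (tB pm + 2) ∈ GrIdeal pp pm := by
      rw [← gen2_eq pm hpm]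
      exact Ideal.subset_span (Set.mem_insert_iff.mpr (Or.inr (Or.inl rfl)))
    have h3 : tA pp - tB pm ∈ GrIdeal pp pm := by
      rw [← gen3_eq]
      exact Ideal.subset_span (Set.mem_insert_iff.mpr (Or.inr (Or.inr rfl)))
    have h12 : (tA pp - 2) * (tB pm + 2) ∈ GrIdeal pp pm := by
      rw [show (tA pp - 2) * (tB pm + 2)
          = (tA pp - 2) * (tA pp + 2) - (tA pp - 2) * (tA pp - tB pm) by ring]
      exact sub_mem h11 (Ideal.mul_mem_left _ _ h3)
    have h21 : (tB pm - 2) * (tA pp + 2) ∈ GrIdeal pp pm := by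
      rw [show (tB pm - 2) * (tA pp + 2)
          = (tB pm - 2) * (tB pm + 2) + (tB pm - 2) * (tA pp - tB pm) by ring]
      exact add_mem h22 (Ideal.mul_mem_left _ _ h3)
    rw [Jp_eq, Ideal.mem_span_pair] at hr
    rw [Jm_eq, Ideal.mem_span_pair] at hs
    obtain ⟨a, b, rfl⟩ := hr
    obtain ⟨c, d, rfl⟩ := hs
    rw [show (a * (tA pp - 2) + b * (tB pm - 2)) * (c * (tA pp + 2) + d * (tB pm + 2))
        = a * c * ((tA pp - 2) * (tA pp + 2)) + a * d * ((tA pp - 2) * (tB pm + 2))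
          + b * c * ((tB pm - 2) * (tA pp + 2)) + b * d * ((tB pm - 2) * (tB pm + 2))
        by ring]
    exact add_mem (add_mem (add_mem (Ideal.mul_mem_left _ _ h11)
      (Ideal.mul_mem_left _ _ h12)) (Ideal.mul_mem_left _ _ h21))
      (Ideal.mul_mem_left _ _ h22)

/-- `P⁻` in a quotient where `t_{p₊}(x) ≡ ε`. -/
lemma mk_Pfalse {J : Ideal Rxy} {pp : ℕ} (hpp : 1 ≤ pp) {r : ℕ} (r' : ℕ)
    (hrp : r ≤ pp) (ε : ℂ) (hA : tA pp - MvPolynomial.C ε ∈ J) :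
    Ideal.Quotient.mk J (Pbasis pp false r r')
      = (ε / 2) • Ideal.Quotient.mk J (Ux r * Uy r') := by
  have hfac : Pbasis pp false r r'
      = MvPolynomial.C (1 / 2 : ℂ) * (tA pp * (Ux r * Uy r')) := by
    have h := congrArg (Polynomial.aeval x0) (cheb_prod pp r hpp hrp)
    rw [map_sub, map_mul] at h
    rw [Pbasis]
    simp only [Bool.false_eq_true, if_false]
    rw [Ux_eq, Ux_eq, Uy_eq, ← mul_sub, h, ← tA, Ux_eq]
    ring
  rw [hfac, mk_C_mul, map_mul,
    show Ideal.Quotient.mk J (tA pp) = Ideal.Quotient.mk J (MvPolynomial.C ε) from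
      (Ideal.Quotient.mk_eq_mk_iff_sub_mem _ _).mpr hA]
  rw [show Ideal.Quotient.mk J (MvPolynomial.C ε) = algebraMap ℂ _ ε from rfl,
    ← Algebra.smul_def, smul_smul]
  congr 1
  ring

lemma mk_Ptrue {J : Ideal Rxy} (pp : ℕ) (r r' : ℕ) :
    Ideal.Quotient.mk J (Pbasis pp true r r')
      = Ideal.Quotient.mk J (Ux r * Uy r') := by
  rw [Pbasis]; simp

end GRmain




set_option maxHeartbeats 1000000 in
/-- The Grothendieck ring `ℂ[x,y]/I` has dimension `2p₊p₋`, and the images of the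
polynomials `P^±_{r,r'}`, `1 ≤ r ≤ p₊`, `1 ≤ r' ≤ p₋`, form a basis. -/
theorem grothendieck_ring_basis (pp pm : ℕ) (hpp : 2 ≤ pp) (hpm : 2 ≤ pm)
    (hco : Nat.Coprime pp pm) :
    FiniteDimensional ℂ (MvPolynomial (Fin 2) ℂ ⧸ GrIdeal pp pm) ∧
    Module.finrank ℂ (MvPolynomial (Fin 2) ℂ ⧸ GrIdeal pp pm) = 2 * pp * pm ∧
    LinearIndependent ℂ (fun t : Bool × Fin pp × Fin pm =>
      Ideal.Quotient.mk (GrIdeal pp pm)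
        (Pbasis pp t.1 ((t.2.1 : ℕ) + 1) ((t.2.2 : ℕ) + 1))) ∧
    Submodule.span ℂ
        (Set.range (fun t : Bool × Fin pp × Fin pm =>
          Ideal.Quotient.mk (GrIdeal pp pm)
            (Pbasis pp t.1 ((t.2.1 : ℕ) + 1) ((t.2.2 : ℕ) + 1)))) = ⊤ := by
  classical
  have hpp1 : 1 ≤ pp := by omega
  have hpm1 : 1 ≤ pm := by omega
  obtain ⟨hfpM, hfpD⟩ := GRaux.tch_sub_two pp hpp1
  obtain ⟨hgpM, hgpD⟩ := GRaux.tch_sub_two pm hpm1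
  obtain ⟨hfmM, hfmD⟩ := GRaux.tch_plus_two pp hpp1
  obtain ⟨hgmM, hgmD⟩ := GRaux.tch_plus_two pm hpm1
  set JP := GRmain.Jp pp pm with hJP
  set JM := GRmain.Jm pp pm with hJM
  have hEq : GrIdeal pp pm = JP ⊓ JM := GRmain.grIdeal_eq_inf pp pm hpp1 hpm1
  have cop : IsCoprime JP JM := (Ideal.isCoprime_iff_sup_eq).mpr (GRmain.sup_Jp_Jm pp pm)
  -- the CRT algebra equivalence
  have hcomm : ∀ c : ℂ, Ideal.quotientInfEquivQuotientProd JP JM cop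
      (algebraMap ℂ _ c) = algebraMap ℂ _ c := by
    intro c
    have h1 : (algebraMap ℂ (GRaux.Rxy ⧸ (JP ⊓ JM)) c)
        = Ideal.Quotient.mk _ (MvPolynomial.C c) := rfl
    rw [h1]
    refine Prod.ext ?_ ?_
    · rw [Ideal.quotientInfEquivQuotientProd_fst, Ideal.Quotient.factor_mk]; rfl
    · rw [Ideal.quotientInfEquivQuotientProd_snd, Ideal.Quotient.factor_mk]; rfl
  set Φa : (GRaux.Rxy ⧸ GrIdeal pp pm) ≃ₐ[ℂ] (GRaux.Rxy ⧸ JP) × (GRaux.Rxy ⧸ JM) :=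
    (Ideal.quotientEquivAlgOfEq ℂ hEq).trans (AlgEquiv.ofRingEquiv hcomm) with hΦa
  set Φ := Φa.toLinearEquiv with hΦdef
  have hΦ : ∀ P : GRaux.Rxy, Φ (Ideal.Quotient.mk (GrIdeal pp pm) P)
      = (Ideal.Quotient.mk JP P, Ideal.Quotient.mk JM P) := by
    intro P
    have h0 : Φ (Ideal.Quotient.mk (GrIdeal pp pm) P)
        = Ideal.quotientInfEquivQuotientProd JP JM cop
            (Ideal.Quotient.mk (JP ⊓ JM) P) := rfl
    rw [h0]
    refine Prod.ext ?_ ?_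
    · rw [Ideal.quotientInfEquivQuotientProd_fst, Ideal.Quotient.factor_mk]
    · rw [Ideal.quotientInfEquivQuotientProd_snd, Ideal.Quotient.factor_mk]
  -- the Chebyshev product families in the two quotient factors
  set u : Fin pp × Fin pm → GRaux.Rxy ⧸ JP := fun k =>
    Ideal.Quotient.mk JP (Ux ((k.1 : ℕ) + 1) * Uy ((k.2 : ℕ) + 1)) with hu_def
  set v : Fin pp × Fin pm → GRaux.Rxy ⧸ JM := fun k =>
    Ideal.Quotient.mk JM (Ux ((k.1 : ℕ) + 1) * Uy ((k.2 : ℕ) + 1)) with hv_def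
  have hu : Submodule.span ℂ (Set.range u) = ⊤ :=
    GRaux.span_U_top hfpM hgpM hfpD hgpD hpp1 hpm1
  have hv : Submodule.span ℂ (Set.range v) = ⊤ :=
    GRaux.span_U_top hfmM hgmM hfmD hgmD hpp1 hpm1
  -- images of the P family
  set W : Bool × Fin pp × Fin pm → (GRaux.Rxy ⧸ JP) × (GRaux.Rxy ⧸ JM) := fun t =>
    Φ (Ideal.Quotient.mk (GrIdeal pp pm)
        (Pbasis pp t.1 ((t.2.1 : ℕ) + 1) ((t.2.2 : ℕ) + 1))) with hW
  have hAinJP : GRmain.tA pp - MvPolynomial.C (2 : ℂ) ∈ JP := by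
    have := GRmain.haJp pp pm
    rwa [show ((2 : GRaux.Rxy)) = MvPolynomial.C (2 : ℂ) from (map_ofNat _ 2).symm] at this
  have hAinJM : GRmain.tA pp - MvPolynomial.C (-2 : ℂ) ∈ JM := by
    have := GRmain.haJm pp pm
    rwa [show MvPolynomial.C (-2 : ℂ) = -(2 : GRaux.Rxy) by
      rw [map_neg, map_ofNat], sub_neg_eq_add]
  have hWval : ∀ t : Bool × Fin pp × Fin pm,
      W t = if t.1 then (u t.2, v t.2) else (u t.2, -v t.2) := by
    rintro ⟨α, k⟩
    have hk1 : (k.1 : ℕ) + 1 ≤ pp := k.1.isLt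
    rw [hW]
    simp only
    rw [hΦ]
    cases α
    · simp only [Bool.false_eq_true, if_false]
      refine Prod.ext ?_ ?_
      · show Ideal.Quotient.mk JP _ = u k
        rw [GRmain.mk_Pfalse hpp1 _ hk1 2 hAinJP]
        norm_num
        exact (map_mul _ _ _).symm
      · show Ideal.Quotient.mk JM _ = -v k
        rw [GRmain.mk_Pfalse hpp1 _ hk1 (-2) hAinJM]
        norm_num
        exact (map_mul _ _ _).symm
    · simp only [if_true]
      refine Prod.ext ?_ ?_
      · show Ideal.Quotient.mk JP _ = u k
        rw [GRmain.mk_Ptrue]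
      · show Ideal.Quotient.mk JM _ = v k
        rw [GRmain.mk_Ptrue]
  -- span of the images is everything
  have hWspan : Submodule.span ℂ (Set.range W) = ⊤ := by
    have hmem1 : ∀ k : Fin pp × Fin pm,
        ((u k, 0) : (GRaux.Rxy ⧸ JP) × (GRaux.Rxy ⧸ JM)) ∈
          Submodule.span ℂ (Set.range W) := by
      intro k
      have e1 : ((u k, 0) : (GRaux.Rxy ⧸ JP) × (GRaux.Rxy ⧸ JM))
          = (2⁻¹ : ℂ) • (W (true, k) + W (false, k)) := by
        rw [hWval, hWval]
        simp only [if_true, Bool.false_eq_true, if_false, Prod.mk_add_mk, Prod.smul_mk]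
        refine Prod.ext ?_ ?_
        · show u k = (2⁻¹ : ℂ) • (u k + u k)
          rw [← two_smul ℂ, smul_smul]
          norm_num
        · simp
      rw [e1]
      exact Submodule.smul_mem _ _ (add_mem
        (Submodule.subset_span ⟨(true, k), rfl⟩)
        (Submodule.subset_span ⟨(false, k), rfl⟩))
    have hmem2 : ∀ k : Fin pp × Fin pm,
        (((0 : GRaux.Rxy ⧸ JP), v k) : (GRaux.Rxy ⧸ JP) × (GRaux.Rxy ⧸ JM)) ∈
          Submodule.span ℂ (Set.range W) := by
      intro k
      have e1 : (((0 : GRaux.Rxy ⧸ JP), v k) : (GRaux.Rxy ⧸ JP) × (GRaux.Rxy ⧸ JM))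
          = (2⁻¹ : ℂ) • (W (true, k) - W (false, k)) := by
        rw [hWval, hWval]
        simp only [if_true, Bool.false_eq_true, if_false, Prod.mk_sub_mk, Prod.smul_mk]
        refine Prod.ext ?_ ?_
        · show (0 : GRaux.Rxy ⧸ JP) = (2⁻¹ : ℂ) • (u k - u k)
          rw [sub_self, smul_zero]
        · show v k = (2⁻¹ : ℂ) • (v k - -v k)
          rw [sub_neg_eq_add, ← two_smul ℂ, smul_smul]
          norm_num
      rw [e1]
      exact Submodule.smul_mem _ _ (sub_mem
        (Submodule.subset_span ⟨(true, k), rfl⟩)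
        (Submodule.subset_span ⟨(false, k), rfl⟩))
    rw [eq_top_iff]
    rintro z -
    have hz : z = (z.1, 0) + (0, z.2) := by
      refine Prod.ext ?_ ?_ <;> simp
    rw [hz]
    refine add_mem ?_ ?_
    · have hz1 : z.1 ∈ Submodule.span ℂ (Set.range u) := by rw [hu]; trivial
      refine Submodule.span_induction ?_ ?_ ?_ ?_ hz1
      · rintro _ ⟨k, rfl⟩; exact hmem1 k
      · exact Submodule.zero_mem _
      · intro x y _ _ hx hy
        have : ((x + y, 0) : (GRaux.Rxy ⧸ JP) × (GRaux.Rxy ⧸ JM)) = (x, 0) + (y, 0) := by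
          simp
        rw [this]; exact add_mem hx hy
      · intro c x _ hx
        have : ((c • x, 0) : (GRaux.Rxy ⧸ JP) × (GRaux.Rxy ⧸ JM)) = c • (x, 0) := by
          simp
        rw [this]; exact Submodule.smul_mem _ _ hx
    · have hz2 : z.2 ∈ Submodule.span ℂ (Set.range v) := by rw [hv]; trivial
      refine Submodule.span_induction ?_ ?_ ?_ ?_ hz2
      · rintro _ ⟨k, rfl⟩; exact hmem2 k
      · exact Submodule.zero_mem _
      · intro x y _ _ hx hy
        have : (((0 : GRaux.Rxy ⧸ JP), x + y)) = ((0 : GRaux.Rxy ⧸ JP), x) + (0, y) := by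
          simp
        rw [this]; exact add_mem hx hy
      · intro c x _ hx
        have : (((0 : GRaux.Rxy ⧸ JP), c • x)) = c • ((0 : GRaux.Rxy ⧸ JP), x) := by
          simp
        rw [this]; exact Submodule.smul_mem _ _ hx
  -- pull the spanning back through Φ
  have hspan : Submodule.span ℂ
      (Set.range (fun t : Bool × Fin pp × Fin pm =>
        Ideal.Quotient.mk (GrIdeal pp pm)
          (Pbasis pp t.1 ((t.2.1 : ℕ) + 1) ((t.2.2 : ℕ) + 1)))) = ⊤ := by
    have h1 : Set.range W = (Φ : (GRaux.Rxy ⧸ GrIdeal pp pm) →ₗ[ℂ] _) ''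
        Set.range (fun t : Bool × Fin pp × Fin pm =>
          Ideal.Quotient.mk (GrIdeal pp pm)
            (Pbasis pp t.1 ((t.2.1 : ℕ) + 1) ((t.2.2 : ℕ) + 1))) := by
      rw [← Set.range_comp]; rfl
    rw [h1, Submodule.span_image] at hWspan
    have hinj := Submodule.map_injective_of_injective
      (f := (Φ : (GRaux.Rxy ⧸ GrIdeal pp pm) →ₗ[ℂ] _)) (by exact Φ.injective)
    apply hinj
    rw [hWspan, Submodule.map_top, eq_comm, LinearMap.range_eq_top]
    exact Φ.surjective
  -- finite dimensionality and dimension count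
  haveI instP : FiniteDimensional ℂ (GRaux.Rxy ⧸ JP) :=
    GRaux.finiteDimensional_quot_Jfg hfpM hgpM (by omega) (by omega)
  haveI instM : FiniteDimensional ℂ (GRaux.Rxy ⧸ JM) :=
    GRaux.finiteDimensional_quot_Jfg hfmM hgmM (by omega) (by omega)
  haveI instI : FiniteDimensional ℂ (GRaux.Rxy ⧸ GrIdeal pp pm) :=
    Module.Finite.equiv Φ.symm
  have h1 : Module.finrank ℂ (GRaux.Rxy ⧸ JP) = pp * pm := by
    rw [show JP = GRaux.Jfg (GRaux.tch pp - 2) (GRaux.tch pm - 2) from rfl,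
      GRaux.finrank_quot_Jfg hfpM hgpM (by omega) (by omega), hfpD, hgpD]
  have h2 : Module.finrank ℂ (GRaux.Rxy ⧸ JM) = pp * pm := by
    rw [show JM = GRaux.Jfg (GRaux.tch pp + 2) (GRaux.tch pm + 2) from rfl,
      GRaux.finrank_quot_Jfg hfmM hgmM (by omega) (by omega), hfmD, hgmD]
  have hrank : Module.finrank ℂ (MvPolynomial (Fin 2) ℂ ⧸ GrIdeal pp pm) = 2 * pp * pm := by
    rw [Φ.finrank_eq, Module.finrank_prod, h1, h2]
    ring
  refine ⟨instI, hrank, ?_, hspan⟩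
  refine linearIndependent_of_top_le_span_of_card_eq_finrank hspan.ge ?_
  rw [hrank]
  simp [Fintype.card_prod]
  ring
end
end

section
/- In ℂ[x,y]/I the basis elements multiply by the fusion rules of the logarithmic (p₊,p₋) model: for all α, β ∈ {+,−}, 1 ≤ r, s ≤ p₊ and 1 ≤ r', s' ≤ p₋, P^α_{r,r'}·P^β_{s,s'} ≡ Σ_{u = |r−s|+1, step 2}^{r+s−1} Σ_{u' = |r'−s'|+1, step 2}^{r'+s'−1} P̃^{αβ}_{u,u'} (mod I), where αβ is the product of signs and P̃^γ_{u,u'} is defined by: P̃^γ_{u,u'} = P^γ_{u,u'} if 1 ≤ u ≤ p₊ and 1 ≤ u' ≤ p₋; P̃^γ_{u,u'} = P^γ_{2p₊−u, u'} + 2·P^{−γ}_{u−p₊, u'} if p₊+1 ≤ u ≤ 2p₊−1 and 1 ≤ u' ≤ p₋; P̃^γ_{u,u'} = P^γ_{u, 2p₋−u'} + 2·P^{−γ}_{u, u'−p₋} if 1 ≤ u ≤ p₊ and p₋+1 ≤ u' ≤ 2p₋−1; and P̃^γ_{u,u'} = P^γ_{2p₊−u, 2p₋−u'} + 2·P^{−γ}_{2p₊−u,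 u'−p₋} + 2·P^{−γ}_{u−p₊, 2p₋−u'} + 4·P^γ_{u−p₊, u'−p₋} if p₊+1 ≤ u ≤ 2p₊−1 and p₋+1 ≤ u' ≤ 2p₋−1. -/
noncomputable section

/-- The linearization `P̃^γ_{u,u'}` of the fusion algebra basis, defined for
`1 ≤ u ≤ 2p₊−1`, `1 ≤ u' ≤ 2p₋−1` by the four indicated cases. -/
def Ptilde (pp pm : ℕ) (γ : Bool) (u u' : ℕ) : MvPolynomial (Fin 2) ℂ :=
  if u ≤ pp then
    if u' ≤ pm then Pbasis pp γ u u'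
    else Pbasis pp γ u (2 * pm - u') + 2 * Pbasis pp (!γ) u (u' - pm)
  else
    if u' ≤ pm then Pbasis pp γ (2 * pp - u) u' + 2 * Pbasis pp (!γ) (u - pp) u'
    else
      Pbasis pp γ (2 * pp - u) (2 * pm - u') + 2 * Pbasis pp (!γ) (2 * pp - u) (u' - pm) +
        2 * Pbasis pp (!γ) (u - pp) (2 * pm - u') + 4 * Pbasis pp γ (u - pp) (u' - pm)

lemma chebU_zero : chebU 0 = 0 := rfl
lemma chebU_one : chebU 1 = 1 := rfl
lemma chebU_add_two (n : ℕ) : chebU (n + 2) = Polynomial.X * chebU (n + 1) - chebU n := rfl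

lemma chebU_xmul (n : ℕ) : Polynomial.X * chebU (n + 1) = chebU (n + 2) + chebU n := by
  rw [chebU_add_two]; ring

lemma chebU_mul (r d : ℕ) :
    chebU r * chebU (r + d) = ∑ i ∈ Finset.range r, chebU (d + 1 + 2 * i) := by
  induction r using Nat.twoStepInduction generalizing d with
  | zero => simp [chebU_zero]
  | one => simp [chebU_one, Nat.add_comm]
  | more r ih1 ih2 =>
    have h1 : chebU (r+1) * chebU (r + 2 + d) =
        ∑ i ∈ Finset.range (r+1), chebU (d + 2 + 2*i) := by
      have h := ih2 (d+1)
      rw [show r + 1 + (d + 1) = r + 2 + d by omega] at h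
      rw [h]
    have h2 : chebU r * chebU (r + 2 + d) =
        ∑ i ∈ Finset.range r, chebU (d + 3 + 2*i) := by
      have h := ih1 (d+2)
      rw [show r + (d + 2) = r + 2 + d by omega] at h
      rw [h]
    rw [chebU_add_two, sub_mul, mul_assoc, h1, h2, Finset.mul_sum]
    have hx : ∀ i ∈ Finset.range (r+1), Polynomial.X * chebU (d+2+2*i)
        = chebU (d+3+2*i) + chebU (d+1+2*i) := by
      intro i _
      have h := chebU_xmul (d+1+2*i)
      rwa [show d+1+2*i+1 = d+2+2*i by omega, show d+1+2*i+2 = d+3+2*i by omega] at h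
    rw [Finset.sum_congr rfl hx, Finset.sum_add_distrib,
      Finset.sum_range_succ (fun i => chebU (d+3+2*i)) r,
      Finset.sum_range_succ (fun i => chebU (d+1+2*i)) (r+1),
      show d+1+2*(r+1) = d+3+2*r by omega]
    ring

lemma chebU_fold (m : ℕ) : ∀ (v q : ℕ), m + 2 = q + v →
    chebU (m + 2 + v) = chebU q + (chebU (m + 3) - chebU (m + 1)) * chebU v := by
  intro v
  induction v using Nat.twoStepInduction with
  | zero =>
    intro q hq
    obtain rfl : q = m + 2 := by omega
    simp [chebU_zero]
  | one =>
    intro q hq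
    obtain rfl : q = m + 1 := by omega
    rw [chebU_one]; ring
  | more v ih1 ih2 =>
    intro q hq
    have h1 := ih1 (q+2) (by omega)
    have h2 := ih2 (q+1) (by omega)
    rw [show m + 2 + (v+1) = m + 2 + v + 1 by omega] at h2
    have hdef : chebU (m + 2 + (v+2)) =
        Polynomial.X * chebU (m + 2 + v + 1) - chebU (m + 2 + v) := by
      rw [show m+2+(v+2) = (m+2+v)+2 by omega]; exact chebU_add_two _
    have hx1 := chebU_xmul q
    have hx2 := chebU_xmul v
    linear_combination hdef + Polynomial.X * h2 - h1 + hx1 +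
      (chebU (m+3) - chebU (m+1)) * hx2

lemma chebU_sq (p : ℕ) (hp : 2 ≤ p) :
    (chebU (p+1) - chebU (p-1))^2 = chebU (2*p+1) - chebU (2*p-1) + 2 := by
  obtain ⟨m, rfl⟩ : ∃ m, p = m + 2 := ⟨p - 2, by omega⟩
  rw [show m+2-1 = m+1 by omega, show 2*(m+2)+1 = 2*m+5 by omega,
    show 2*(m+2)-1 = 2*m+3 by omega, show m+2+1 = m+3 by omega]
  have f1 := chebU_fold m (m+2) 0 (by omega)
  have f2 := chebU_fold m (m+1) 1 (by omega)
  rw [show m+2+(m+2) = 2*m+4 by omega, chebU_zero] at f1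
  rw [show m+2+(m+1) = 2*m+3 by omega, chebU_one] at f2
  have f3 : chebU (2*m+5) = Polynomial.X * chebU (2*m+4) - chebU (2*m+3) := by
    rw [show 2*m+5 = (2*m+3)+2 by omega]; exact chebU_add_two _
  have f4 := chebU_xmul (m+1)
  rw [show m+1+1 = m+2 by omega, show m+1+2 = m+3 by omega] at f4
  linear_combination (-1 : Polynomial ℂ) * f3 - Polynomial.X * f1 + 2 * f2 -
    (chebU (m+3) - chebU (m+1)) * f4



lemma Ux_fold (p v : ℕ) (hp : 2 ≤ p) (hv : v ≤ p) :
    Ux (p + v) = Ux (p - v) + (Ux (p + 1) - Ux (p - 1)) * Ux v := by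
  have h := chebU_fold (p - 2) v (p - v) (by omega)
  rw [show p-2+2 = p by omega, show p-2+3 = p+1 by omega, show p-2+1 = p-1 by omega] at h
  simp only [Ux]
  rw [h]
  simp only [map_add, map_mul, map_sub]

lemma Uy_fold (p v : ℕ) (hp : 2 ≤ p) (hv : v ≤ p) :
    Uy (p + v) = Uy (p - v) + (Uy (p + 1) - Uy (p - 1)) * Uy v := by
  have h := chebU_fold (p - 2) v (p - v) (by omega)
  rw [show p-2+2 = p by omega, show p-2+3 = p+1 by omega, show p-2+1 = p-1 by omega] at h
  simp only [Uy]
  rw [h]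
  simp only [map_add, map_mul, map_sub]

lemma Ux_mul_le (r s : ℕ) (h : r ≤ s) :
    Ux r * Ux s = ∑ i ∈ Finset.range r, Ux (s - r + 1 + 2 * i) := by
  obtain ⟨d, rfl⟩ := Nat.exists_eq_add_of_le h
  have h := chebU_mul r d
  simp only [Ux, ← map_mul, h, map_sum, Nat.add_sub_cancel_left]

lemma Ux_mul (r s : ℕ) :
    Ux r * Ux s = ∑ i ∈ Finset.range (min r s), Ux (max r s - min r s + 1 + 2 * i) := by
  rcases le_total r s with h | h
  · rw [min_eq_left h, max_eq_right h]; exact Ux_mul_le r s h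
  · rw [min_eq_right h, max_eq_left h, mul_comm]; exact Ux_mul_le s r h

lemma Uy_mul_le (r s : ℕ) (h : r ≤ s) :
    Uy r * Uy s = ∑ i ∈ Finset.range r, Uy (s - r + 1 + 2 * i) := by
  obtain ⟨d, rfl⟩ := Nat.exists_eq_add_of_le h
  have h := chebU_mul r d
  simp only [Uy, ← map_mul, h, map_sum, Nat.add_sub_cancel_left]

lemma Uy_mul (r s : ℕ) :
    Uy r * Uy s = ∑ i ∈ Finset.range (min r s), Uy (max r s - min r s + 1 + 2 * i) := by
  rcases le_total r s with h | h
  · rw [min_eq_left h, max_eq_right h]; exact Uy_mul_le r s h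
  · rw [min_eq_right h, max_eq_left h, mul_comm]; exact Uy_mul_le s r h

lemma Ux_sq (p : ℕ) (hp : 2 ≤ p) :
    (Ux (p+1) - Ux (p-1))^2 = Ux (2*p+1) - Ux (2*p-1) + 2 := by
  have h := chebU_sq p hp
  simp only [Ux]
  rw [← map_sub, ← map_pow, h]
  simp only [map_add, map_sub, map_ofNat]

lemma Uy_sq (p : ℕ) (hp : 2 ≤ p) :
    (Uy (p+1) - Uy (p-1))^2 = Uy (2*p+1) - Uy (2*p-1) + 2 := by
  have h := chebU_sq p hp
  simp only [Uy]
  rw [← map_sub, ← map_pow, h]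
  simp only [map_add, map_sub, map_ofNat]

-- ### Quotient level

/-- `T_{p₊}(x)` as an element of `ℂ[x,y]`. -/
def TxP (pp : ℕ) : MvPolynomial (Fin 2) ℂ :=
  MvPolynomial.C (1/2 : ℂ) * (Ux (pp + 1) - Ux (pp - 1))

/-- `T_{p₋}(y)` as an element of `ℂ[x,y]`. -/
def TyP (pm : ℕ) : MvPolynomial (Fin 2) ℂ :=
  MvPolynomial.C (1/2 : ℂ) * (Uy (pm + 1) - Uy (pm - 1))

lemma two_TxP (pp : ℕ) : Ux (pp + 1) - Ux (pp - 1) = 2 * TxP pp := by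
  rw [TxP, ← mul_assoc,
    show ((2 : MvPolynomial (Fin 2) ℂ)) = MvPolynomial.C (2:ℂ) from (map_ofNat _ 2).symm,
    ← map_mul]
  norm_num

lemma two_TyP (pm : ℕ) : Uy (pm + 1) - Uy (pm - 1) = 2 * TyP pm := by
  rw [TyP, ← mul_assoc,
    show ((2 : MvPolynomial (Fin 2) ℂ)) = MvPolynomial.C (2:ℂ) from (map_ofNat _ 2).symm,
    ← map_mul]
  norm_num

lemma mk_g1 (pp pm : ℕ) :
    Ideal.Quotient.mk (GrIdeal pp pm) (Ux (2*pp+1) - Ux (2*pp-1) - 2) = 0 := by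
  rw [Ideal.Quotient.eq_zero_iff_mem]
  exact Ideal.subset_span (by simp)

lemma mk_g2 (pp pm : ℕ) :
    Ideal.Quotient.mk (GrIdeal pp pm) (Uy (2*pm+1) - Uy (2*pm-1) - 2) = 0 := by
  rw [Ideal.Quotient.eq_zero_iff_mem]
  exact Ideal.subset_span (by simp)

lemma mk_g3 (pp pm : ℕ) :
    Ideal.Quotient.mk (GrIdeal pp pm) (Ux (pp+1) - Ux (pp-1) - Uy (pm+1) + Uy (pm-1)) = 0 := by
  rw [Ideal.Quotient.eq_zero_iff_mem]
  exact Ideal.subset_span (by simp)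

lemma tx_sq (pp pm : ℕ) (hpp : 2 ≤ pp) :
    (Ideal.Quotient.mk (GrIdeal pp pm) (TxP pp))^2 = 1 := by
  have hc : (MvPolynomial.C ((1:ℂ)/2) : MvPolynomial (Fin 2) ℂ)^2 = MvPolynomial.C ((1:ℂ)/4) := by
    rw [← map_pow]; norm_num
  have hc4 : MvPolynomial.C ((1:ℂ)/4) * 4 = (1 : MvPolynomial (Fin 2) ℂ) := by
    rw [show ((4 : MvPolynomial (Fin 2) ℂ)) = MvPolynomial.C (4:ℂ) from (map_ofNat _ 4).symm,
      ← map_mul]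
    norm_num
  have hS := Ux_sq pp hpp
  have hsq : TxP pp ^ 2 =
      MvPolynomial.C ((1:ℂ)/4) * (Ux (2*pp+1) - Ux (2*pp-1) - 2) + 1 := by
    rw [TxP]
    linear_combination ((Ux (pp+1) - Ux (pp-1))^2) * hc + MvPolynomial.C ((1:ℂ)/4) * hS + hc4
  rw [← map_pow, hsq, map_add, map_mul, mk_g1, map_one, mul_zero, zero_add]

lemma txy (pp pm : ℕ) :
    Ideal.Quotient.mk (GrIdeal pp pm) (TxP pp) = Ideal.Quotient.mk (GrIdeal pp pm) (TyP pm) := by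
  have h : TxP pp - TyP pm =
      MvPolynomial.C ((1:ℂ)/2) * (Ux (pp+1) - Ux (pp-1) - Uy (pm+1) + Uy (pm-1)) := by
    rw [TxP, TyP]; ring
  have := congrArg (Ideal.Quotient.mk (GrIdeal pp pm)) h
  rw [map_sub, map_mul, mk_g3, mul_zero, sub_eq_zero] at this
  exact this

lemma Pbasis_eq (pp : ℕ) (hpp : 2 ≤ pp) (γ : Bool) (a b : ℕ) (ha : a ≤ pp) :
    Pbasis pp γ a b = (if γ then 1 else TxP pp) * (Ux a * Uy b) := by
  cases γ with
  | true => simp [Pbasis]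
  | false =>
    have h := Ux_fold pp a hpp ha
    simp only [Pbasis, TxP, Bool.false_eq_true, if_false]
    linear_combination (MvPolynomial.C ((1:ℂ)/2) * Uy b) * h

lemma key (pp pm : ℕ) (hpp : 2 ≤ pp) (hpm : 2 ≤ pm) (γ : Bool) (u u' : ℕ)
    (hu1 : 1 ≤ u) (hu2 : u ≤ 2*pp - 1) (hv1 : 1 ≤ u') (hv2 : u' ≤ 2*pm - 1) :
    (if γ then 1 else Ideal.Quotient.mk (GrIdeal pp pm) (TxP pp)) *
      Ideal.Quotient.mk (GrIdeal pp pm) (Ux u * Uy u') =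
    Ideal.Quotient.mk (GrIdeal pp pm) (Ptilde pp pm γ u u') := by
  set φ := Ideal.Quotient.mk (GrIdeal pp pm) with hφ
  set t := φ (TxP pp) with hts
  have ht2 : t^2 = 1 := tx_sq pp pm hpp
  have hty : φ (TyP pm) = t := (txy pp pm).symm
  have hPb : ∀ (δ : Bool) (a b : ℕ), a ≤ pp →
      φ (Pbasis pp δ a b) = (if δ then 1 else t) * (φ (Ux a) * φ (Uy b)) := by
    intro δ a b ha
    rw [Pbasis_eq pp hpp δ a b ha, map_mul, map_mul]
    cases δ <;> simp [hts]
  have hqx : ¬ u ≤ pp → φ (Ux u) = φ (Ux (2*pp - u)) + 2 * t * φ (Ux (u - pp)) := by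
    intro h1
    have h := Ux_fold pp (u - pp) hpp (by omega)
    rw [show pp + (u - pp) = u by omega, show pp - (u - pp) = 2*pp - u by omega,
      two_TxP pp] at h
    rw [h]
    simp only [map_add, map_mul, map_ofNat]
    try ring
  have hqy : ¬ u' ≤ pm → φ (Uy u') = φ (Uy (2*pm - u')) + 2 * t * φ (Uy (u' - pm)) := by
    intro h2
    have h := Uy_fold pm (u' - pm) hpm (by omega)
    rw [show pm + (u' - pm) = u' by omega, show pm - (u' - pm) = 2*pm - u' by omega,
      two_TyP pm] at h
    rw [h]
    simp only [map_add, map_mul, map_ofNat, hty]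
    try ring
  by_cases h1 : u ≤ pp <;> by_cases h2 : u' ≤ pm
  · -- both small
    rw [Ptilde, if_pos h1, if_pos h2, hPb γ u u' h1, map_mul]
  · -- u small, u' large
    rw [Ptilde, if_pos h1, if_neg h2]
    simp only [map_add, map_mul, map_ofNat]
    rw [hPb γ u (2*pm - u') h1, hPb (!γ) u (u' - pm) h1, hqy h2]
    cases γ with
    | false =>
      simp only [Bool.not_false, Bool.false_eq_true, if_false, if_true, eq_self_iff_true]
      linear_combination (2 * (φ (Ux u) * φ (Uy (u' - pm)))) * ht2
    | true =>
      simp only [Bool.not_true, Bool.false_eq_true, if_false, if_true, eq_self_iff_true]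
      ring
  · -- u large, u' small
    rw [Ptilde, if_neg h1, if_pos h2]
    simp only [map_add, map_mul, map_ofNat]
    rw [hPb γ (2*pp - u) u' (by omega), hPb (!γ) (u - pp) u' (by omega), hqx h1]
    cases γ with
    | false =>
      simp only [Bool.not_false, Bool.false_eq_true, if_false, if_true, eq_self_iff_true]
      linear_combination (2 * (φ (Ux (u - pp)) * φ (Uy u'))) * ht2
    | true =>
      simp only [Bool.not_true, Bool.false_eq_true, if_false, if_true, eq_self_iff_true]
      ring
  · -- both large
    rw [Ptilde, if_neg h1, if_neg h2]
    simp only [map_add, map_mul, map_ofNat]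
    rw [hPb γ (2*pp - u) (2*pm - u') (by omega), hPb (!γ) (2*pp - u) (u' - pm) (by omega),
      hPb (!γ) (u - pp) (2*pm - u') (by omega), hPb γ (u - pp) (u' - pm) (by omega),
      hqx h1, hqy h2]
    cases γ with
    | false =>
      simp only [Bool.not_false, Bool.false_eq_true, if_false, if_true, eq_self_iff_true]
      linear_combination (2 * (φ (Ux (2*pp - u)) * φ (Uy (u' - pm))) +
        2 * (φ (Ux (u - pp)) * φ (Uy (2*pm - u'))) +
        4 * t * (φ (Ux (u - pp)) * φ (Uy (u' - pm)))) * ht2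
    | true =>
      simp only [Bool.not_true, Bool.false_eq_true, if_false, if_true, eq_self_iff_true]
      linear_combination (4 * (φ (Ux (u - pp)) * φ (Uy (u' - pm)))) * ht2

/-- The fusion rules of the logarithmic `(p₊,p₋)` model hold in `ℂ[x,y]/I`:
`P^α_{r,r'}·P^β_{s,s'} ≡ Σ_{u,u'} P̃^{αβ}_{u,u'} (mod I)`. -/
theorem fusion_rules (pp pm : ℕ) (hpp : 2 ≤ pp) (hpm : 2 ≤ pm) (hco : Nat.Coprime pp pm)
    (α β : Bool) (r s r' s' : ℕ)
    (hr1 : 1 ≤ r) (hr2 : r ≤ pp) (hs1 : 1 ≤ s) (hs2 : s ≤ pp)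
    (hr'1 : 1 ≤ r') (hr'2 : r' ≤ pm) (hs'1 : 1 ≤ s') (hs'2 : s' ≤ pm) :
    Ideal.Quotient.mk (GrIdeal pp pm) (Pbasis pp α r r' * Pbasis pp β s s') =
      Ideal.Quotient.mk (GrIdeal pp pm)
        (∑ i ∈ Finset.range (min r s), ∑ j ∈ Finset.range (min r' s'),
          Ptilde pp pm (α == β)
            (max r s - min r s + 1 + 2 * i) (max r' s' - min r' s' + 1 + 2 * j)) := by
  set φ := Ideal.Quotient.mk (GrIdeal pp pm) with hφ
  set t := φ (TxP pp) with hts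
  have ht2 : t^2 = 1 := tx_sq pp pm hpp
  rw [Pbasis_eq pp hpp α r r' hr2, Pbasis_eq pp hpp β s s' hs2,
    mul_mul_mul_comm, mul_mul_mul_comm (Ux r) (Uy r'), Ux_mul r s, Uy_mul r' s',
    Finset.sum_mul_sum]
  simp only [map_mul, map_sum]
  have hone : ∀ δ : Bool, φ (if δ then 1 else TxP pp) = (if δ then 1 else t) := by
    intro δ; cases δ <;> simp [hts]
  have hss : φ (if α then 1 else TxP pp) * φ (if β then 1 else TxP pp) =
      (if (α == β) then 1 else t) := by
    rw [hone, hone]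
    cases α <;> cases β
    · show t * t = 1
      linear_combination ht2
    · show t * 1 = t
      ring
    · show 1 * t = t
      ring
    · show (1 : MvPolynomial (Fin 2) ℂ ⧸ GrIdeal pp pm) * 1 = 1
      ring
  rw [hss, Finset.mul_sum]
  refine Finset.sum_congr rfl fun i hi => ?_
  rw [Finset.mul_sum]
  refine Finset.sum_congr rfl fun j hj => ?_
  have hi' := Finset.mem_range.mp hi
  have hj' := Finset.mem_range.mp hj
  exact key pp pm hpp hpm (α == β) _ _ (by omega) (by omega) (by omega) (by omega)
end
end

section
/- For coprime integers p₊, p₋ ≥ 2 and q₊ = exp(πi/p₊), the following factorization of polynomials in ℂ[x] holds: U_{2p₊+1}(x) − U_{2p₊−1}(x) − 2 = ∏_{r=0}^{p₊−1} (x + q₊^{p₋r} + q₊^{-p₋r})·(x − q₊^{p₋r} − q₊^{-p₋r}). -/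
noncomputable section

lemma chebU_eval (z : ℂ) (hz : z ≠ 0) (s : ℕ) :
    (chebU s).eval (z + z⁻¹) * (z - z⁻¹) = z ^ s - z⁻¹ ^ s := by
  have hz1 : z * z⁻¹ = 1 := mul_inv_cancel₀ hz
  induction s using Nat.twoStepInduction with
  | zero => simp [chebU]
  | one => simp [chebU]
  | more n ih1 ih2 =>
    show ((Polynomial.X * chebU (n+1) - chebU n).eval (z + z⁻¹)) * (z - z⁻¹) = _
    simp only [Polynomial.eval_sub, Polynomial.eval_mul, Polynomial.eval_X]
    linear_combination (z + z⁻¹) * ih2 - ih1 + (z ^ n - z⁻¹ ^ n) * hz1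

lemma prod_sub_pow {n : ℕ} (hn : 0 < n) {η : ℂ} (hη : IsPrimitiveRoot η n) (u : ℂ) :
    ∏ r ∈ Finset.range n, (u - η ^ r) = u ^ n - 1 := by
  have h := X_pow_sub_C_eq_prod hη hn (one_pow n)
  have h2 := congrArg (Polynomial.eval u) h
  simpa [Polynomial.eval_prod] using h2.symm

open Polynomial in
/-- The factorization
`U_{2p₊+1}(x) − U_{2p₊−1}(x) − 2 = ∏_{r=0}^{p₊−1} (x + q₊^{p₋r} + q₊^{−p₋r})(x − q₊^{p₋r} − q₊^{−p₋r})`. -/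
theorem chebyshev_factorization (pp pm : ℕ) (hpp : 2 ≤ pp) (hpm : 2 ≤ pm)
    (hco : Nat.Coprime pp pm) :
    chebU (2 * pp + 1) - chebU (2 * pp - 1) - 2 =
      ∏ r ∈ Finset.range pp,
        ((X : ℂ[X]) + C (rootOfUnity pp ^ (pm * r) + (rootOfUnity pp ^ (pm * r))⁻¹)) *
          ((X : ℂ[X]) - C (rootOfUnity pp ^ (pm * r) + (rootOfUnity pp ^ (pm * r))⁻¹)) := by
  obtain ⟨k, hk⟩ : ∃ k, pp = k + 2 := ⟨pp - 2, by omega⟩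
  set q : ℂ := rootOfUnity pp with hqdef
  have hq0 : q ≠ 0 := Complex.exp_ne_zero _
  have hζ : IsPrimitiveRoot (q ^ 2) pp := by
    have h := Complex.isPrimitiveRoot_exp pp (by omega)
    have : q ^ 2 = Complex.exp (2 * Real.pi * Complex.I / pp) := by
      rw [hqdef, rootOfUnity, sq, ← Complex.exp_add]
      congr 1
      ring
    rwa [this]
  have hη : IsPrimitiveRoot ((q ^ 2) ^ pm) pp := hζ.pow_of_coprime pm hco.symm
  have hηinv : IsPrimitiveRoot (((q ^ 2) ^ pm)⁻¹) pp := hη.inv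
  set η : ℂ := (q ^ 2) ^ pm with hηdef
  rw [← sub_eq_zero]
  apply Polynomial.eq_zero_of_infinite_isRoot
  apply Set.Infinite.mono (s := (fun t : ℝ => (t : ℂ) + (t : ℂ)⁻¹) '' Set.Ioi 1)
  · -- subset of roots
    rintro x ⟨t, ht, rfl⟩
    simp only [Set.mem_Ioi] at ht
    set z : ℂ := (t : ℂ) with hzdef
    have hz0 : z ≠ 0 := by
      simp only [hzdef, Ne, Complex.ofReal_eq_zero]; nlinarith
    have hz1 : z * z⁻¹ = 1 := mul_inv_cancel₀ hz0
    have hzsub : z - z⁻¹ ≠ 0 := by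
      have : z - z⁻¹ = ((t - t⁻¹ : ℝ) : ℂ) := by push_cast; ring
      rw [this, Ne, Complex.ofReal_eq_zero]
      have h1 : t⁻¹ < 1 := by
        rw [inv_lt_one_iff₀]; right; exact ht
      intro h; nlinarith
    -- LHS evaluation
    have hL : ((chebU (2 * pp + 1) - chebU (2 * pp - 1) - 2).eval (z + z⁻¹)) * (z - z⁻¹)
        = z ^ (2 * k + 5) - z⁻¹ ^ (2 * k + 5) - (z ^ (2 * k + 3) - z⁻¹ ^ (2 * k + 3))
          - 2 * (z - z⁻¹) := by
      have e1 : 2 * pp + 1 = 2 * k + 5 := by omega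
      have e2 : 2 * pp - 1 = 2 * k + 3 := by omega
      rw [e1, e2]
      simp only [Polynomial.eval_sub, Polynomial.eval_ofNat]
      linear_combination chebU_eval z hz0 (2 * k + 5) - chebU_eval z hz0 (2 * k + 3)
    simp only [Polynomial.eval_sub, Polynomial.eval_ofNat] at hL
    -- RHS evaluation
    have hR : ((∏ r ∈ Finset.range pp,
          ((X : ℂ[X]) + C (q ^ (pm * r) + (q ^ (pm * r))⁻¹)) *
            ((X : ℂ[X]) - C (q ^ (pm * r) + (q ^ (pm * r))⁻¹))).eval (z + z⁻¹))
        = (z⁻¹ ^ 2) ^ pp * ((z ^ 2) ^ pp - 1) * ((z ^ 2) ^ pp - 1) := by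
      rw [Polynomial.eval_prod]
      have step : ∀ r ∈ Finset.range pp,
          ((((X : ℂ[X]) + C (q ^ (pm * r) + (q ^ (pm * r))⁻¹)) *
            ((X : ℂ[X]) - C (q ^ (pm * r) + (q ^ (pm * r))⁻¹))).eval (z + z⁻¹))
          = z⁻¹ ^ 2 * ((z ^ 2 - η ^ r) * (z ^ 2 - (η⁻¹) ^ r)) := by
        intro r _
        have ha0 : q ^ (pm * r) ≠ 0 := pow_ne_zero _ hq0
        have hηr : η ^ r = (q ^ (pm * r)) ^ 2 := by
          rw [hηdef, ← pow_mul, ← pow_mul, ← pow_mul]; ring_nf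
        have hηrinv : (η⁻¹) ^ r = ((q ^ (pm * r)) ^ 2)⁻¹ := by
          rw [inv_pow, hηr]
        simp only [Polynomial.eval_mul, Polynomial.eval_add, Polynomial.eval_sub,
          Polynomial.eval_X, Polynomial.eval_C]
        rw [hηr, hηrinv]
        field_simp
        ring
      rw [Finset.prod_congr rfl step, Finset.prod_mul_distrib, Finset.prod_mul_distrib,
        Finset.prod_const, Finset.card_range, prod_sub_pow (by omega) hη, prod_sub_pow (by omega) hηinv]
      ring
    simp only [Set.mem_setOf_eq, Polynomial.IsRoot, Polynomial.eval_sub, Polynomial.eval_ofNat]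
    rw [sub_eq_zero]
    apply mul_right_cancel₀ hzsub
    rw [hL, hR]
    have h2pp : (z ^ 2) ^ pp = z ^ (2 * k + 4) := by rw [← pow_mul]; congr 1; omega
    have h2ppi : (z⁻¹ ^ 2) ^ pp = z⁻¹ ^ (2 * k + 4) := by rw [← pow_mul]; congr 1; omega
    rw [h2pp, h2ppi]
    simp only [inv_pow]
    field_simp
    ring
  · -- infinite set
    apply Set.Infinite.image
    · intro a ha b hb hab
      simp only [Set.mem_Ioi] at ha hb
      have hab' : a + a⁻¹ = b + b⁻¹ := by
        have : ((a + a⁻¹ : ℝ) : ℂ) = ((b + b⁻¹ : ℝ) : ℂ) := by push_cast; exact hab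
        exact_mod_cast this
      have ha0 : a ≠ 0 := by nlinarith
      have hb0 : b ≠ 0 := by nlinarith
      have key : (a - b) * (a * b - 1) = 0 := by
        field_simp at hab'
        nlinarith [hab']
      rcases mul_eq_zero.mp key with h | h
      · linarith [sub_eq_zero.mp h]
      · nlinarith
    · exact Set.Ioi_infinite 1
end
end

section
/- Let p ≥ 1 be an integer and ψ := U_{2p+1} − U_{2p−1} − 2 ∈ ℂ[x]. Then: (i) ψ'(2) = 4p² and ψ'(−2) = −4p², so ±2 are simple roots of ψ; and (ii) every root a ∈ ℂ of ψ with a ≠ 2 and a ≠ −2 satisfies ψ'(a) = 0 and (a² − 4)·ψ''(a) = 8p² (in particular a is a root of multiplicity exactly 2). -/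
noncomputable section

/-!
With `C n` the Vieta–Lucas polynomial (`C n (2 cos t) = 2 cos (n t)`) and `S` the
Vieta–Fibonacci polynomials, `chebU (s + 1) = S s` and `ψ = C (2p) - 2`. Three identities drive
the proof: `C n' = n S (n - 1)`, the Pell equation `C n ^ 2 - (X ^ 2 - 4) S (n - 1) ^ 2 = 4`, and
the differential equation `(X ^ 2 - 4) C n'' = n ^ 2 C n - X C n'`. At `±2` the derivative is
`n ^ 2` up to sign. At a root `a ≠ ±2` we have `C n a = 2`, so Pell forces `S (n - 1) a = 0`, i.e.
`ψ'(a) = 0`, and then the differential equation gives `(a ^ 2 - 4) ψ''(a) = 2 n ^ 2 ≠ 0`.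
-/

namespace Polynomial

theorem rootMultiplicity_eq_of_isRoot_iterate_derivative {R : Type*} [CommRing R]
    [NoZeroDivisors R] [CharZero R] {p : R[X]} {t : R} {n : ℕ}
    (hroot : ∀ m < n, (derivative^[m] p).IsRoot t) (hn : ¬ (derivative^[n] p).IsRoot t) :
    p.rootMultiplicity t = n := by
  have hp : p ≠ 0 := by
    rintro rfl
    simp at hn
  refine le_antisymm (not_lt.1 fun h ↦ hn ?_) ?_
  · exact (lt_rootMultiplicity_iff_isRoot_iterate_derivative hp).1 h n le_rfl
  · cases n with
    | zero => exact Nat.zero_le _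
    | succ n =>
      exact (lt_rootMultiplicity_iff_isRoot_iterate_derivative hp).2 fun m hm ↦
        hroot m (Nat.lt_succ_of_le hm)

namespace Chebyshev

section CommRing

variable (R : Type*) [CommRing R]

theorem C_eq_S_sub_S (n : ℤ) : C R n = S R n - S R (n - 2) := by
  linear_combination (norm := ring_nf) C_eq_S_sub_X_mul_S R n + S_sub_two R n

theorem X_mul_C_add_one_sub_two_mul_C (n : ℤ) :
    X * C R (n + 1) - 2 * C R n = (X ^ 2 - 4) * S R n := by
  linear_combination (norm := ring_nf)
    X * C_eq_S_sub_X_mul_S R (n + 1) - 2 * C_eq_S_sub_X_mul_S R n + 2 * X * S_add_one R n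

theorem C_sq_sub_X_sq_sub_four_mul_S_sq (n : ℤ) :
    C R n ^ 2 - (X ^ 2 - 4) * S R (n - 1) ^ 2 = 4 := by
  have h := S_sq_add_S_sq R (n - 1)
  rw [sub_add_cancel] at h
  linear_combination (norm := ring_nf)
    4 * h + (C R n + 2 * S R n - X * S R (n - 1)) * C_eq_S_sub_X_mul_S R n

theorem C_derivative_eq_S (n : ℤ) : derivative (C R n) = n * S R (n - 1) := by
  induction n using Polynomial.Chebyshev.induct' with
  | zero => simp
  | one => simp
  | add_two n ih1 ih2 =>
    have h := congr_arg derivative (C_add_two R n)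
    simp only [derivative_sub, derivative_mul, derivative_X, one_mul] at h
    linear_combination (norm := (push_cast; ring_nf))
      h + (X : R[X]) * ih1 - ih2 + C_eq_S_sub_X_mul_S R (n + 1) - (n : R[X]) * S_add_one R n
  | neg n ih =>
    rw [C_neg, ih, S_neg_sub_one]
    push_cast
    ring

theorem X_sq_sub_four_mul_derivative_S (n : ℤ) :
    (X ^ 2 - 4) * derivative (S R (n - 1)) = (n : R[X]) * C R n - X * S R (n - 1) := by
  induction n using Polynomial.Chebyshev.induct' with
  | zero => simp
  | one => simp
  | add_two n ih1 ih2 =>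
    have h := congr_arg derivative (S_add_one R n)
    simp only [derivative_sub, derivative_mul, derivative_X, one_mul] at h
    linear_combination (norm := (push_cast; ring_nf))
      (X ^ 2 - 4 : R[X]) * h + (X : R[X]) * ih1 - ih2 - (n + 2 : R[X]) * C_add_two R n
        + (X : R[X]) * S_add_one R n - X_mul_C_add_one_sub_two_mul_C R n
  | neg n ih =>
    rw [C_neg, S_neg_sub_one, derivative_neg]
    push_cast
    linear_combination -ih

theorem X_sq_sub_four_mul_derivative_derivative_C (n : ℤ) :
    (X ^ 2 - 4) * derivative (derivative (C R n)) =
      (n : R[X]) ^ 2 * C R n - X * derivative (C R n) := by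
  rw [C_derivative_eq_S, derivative_mul, derivative_intCast]
  linear_combination (n : R[X]) * X_sq_sub_four_mul_derivative_S R n

theorem derivative_C_eval_two (n : ℤ) : (derivative (C R n)).eval 2 = n ^ 2 := by
  simp only [C_derivative_eq_S, eval_mul, eval_intCast, S_eval_two]
  push_cast
  ring

theorem derivative_C_eval_neg_two (n : ℤ) :
    (derivative (C R n)).eval (-2) = -n.negOnePow * n ^ 2 := by
  simp only [C_derivative_eq_S, eval_mul, eval_intCast, S_eval_neg_two, Int.negOnePow_sub,
    Int.negOnePow_one]
  push_cast
  ring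

end CommRing

section IsDomain

variable {R : Type*} [CommRing R] [IsDomain R] {n : ℤ} {a : R}

theorem derivative_C_eval_eq_zero (ha : a ^ 2 ≠ 4) (h : (C R n).eval a = 2) :
    (derivative (C R n)).eval a = 0 := by
  have pell := congr_arg (eval a) (C_sq_sub_X_sq_sub_four_mul_S_sq R n)
  simp only [eval_sub, eval_mul, eval_pow, eval_X, eval_ofNat, h] at pell
  have hS : (S R (n - 1)).eval a = 0 := by
    have : (a ^ 2 - 4) * (S R (n - 1)).eval a ^ 2 = 0 := by linear_combination -pell
    exact pow_eq_zero_iff two_ne_zero |>.1 <| (mul_eq_zero.1 this).resolve_left (sub_ne_zero.2 ha)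
  simp [C_derivative_eq_S, hS]

theorem sq_sub_four_mul_derivative_derivative_C_eval (ha : a ^ 2 ≠ 4)
    (h : (C R n).eval a = 2) :
    (a ^ 2 - 4) * (derivative (derivative (C R n))).eval a = 2 * n ^ 2 := by
  have ode := congr_arg (eval a) (X_sq_sub_four_mul_derivative_derivative_C R n)
  simp only [eval_sub, eval_mul, eval_pow, eval_X, eval_ofNat, eval_intCast, h,
    derivative_C_eval_eq_zero ha h] at ode
  linear_combination ode

end IsDomain

end Chebyshev

end Polynomial

open Polynomial Polynomial.Chebyshev

theorem chebU_eq_S (n : ℕ) : chebU n = S ℂ (n - 1) := by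
  induction n using Nat.twoStepInduction with
  | zero => simp [chebU]
  | one => simp [chebU]
  | more n ih1 ih2 =>
    rw [chebU, ih1, ih2]
    push_cast
    linear_combination (norm := ring_nf) -S_add_one ℂ n

theorem chebU_add_one_sub_chebU_sub_one {n : ℕ} (hn : 1 ≤ n) :
    chebU (n + 1) - chebU (n - 1) = C ℂ n := by
  rw [chebU_eq_S, chebU_eq_S, C_eq_S_sub_S, Nat.cast_sub hn]
  push_cast
  ring_nf

open Polynomial in
/-- Root structure of `ψ = U_{2p+1} − U_{2p−1} − 2`: the roots `±2` are simple with
`ψ'(±2) = ±4p²`, and every other root `a` is a double root with `ψ'(a) = 0` and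
`(a² − 4)·ψ''(a) = 8p²`. -/
theorem psi_root_structure (p : ℕ) (hp : 1 ≤ p) :
    (Polynomial.eval (2 : ℂ) (derivative (chebU (2 * p + 1) - chebU (2 * p - 1) - 2)) =
        4 * (p : ℂ) ^ 2) ∧
    (Polynomial.eval (-2 : ℂ) (derivative (chebU (2 * p + 1) - chebU (2 * p - 1) - 2)) =
        -(4 * (p : ℂ) ^ 2)) ∧
    rootMultiplicity (2 : ℂ) (chebU (2 * p + 1) - chebU (2 * p - 1) - 2) = 1 ∧
    rootMultiplicity (-2 : ℂ) (chebU (2 * p + 1) - chebU (2 * p - 1) - 2) = 1 ∧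
    ∀ a : ℂ, Polynomial.eval a (chebU (2 * p + 1) - chebU (2 * p - 1) - 2) = 0 →
      a ≠ 2 → a ≠ -2 →
      Polynomial.eval a (derivative (chebU (2 * p + 1) - chebU (2 * p - 1) - 2)) = 0 ∧
      (a ^ 2 - 4) *
          Polynomial.eval a
            (derivative (derivative (chebU (2 * p + 1) - chebU (2 * p - 1) - 2))) =
        8 * (p : ℂ) ^ 2 ∧
      rootMultiplicity a (chebU (2 * p + 1) - chebU (2 * p - 1) - 2) = 2 := by
  have hn : Even (2 * p : ℤ) := even_two_mul _
  have hp0 : (p : ℂ) ≠ 0 := by exact_mod_cast (by omega : p ≠ 0)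
  rw [chebU_add_one_sub_chebU_sub_one (by omega : 1 ≤ 2 * p)]
  push_cast
  simp only [derivative_sub, derivative_ofNat, sub_zero, eval_sub, eval_ofNat, sub_eq_zero]
  have hd2 := derivative_C_eval_two ℂ (2 * p)
  have hdm2 := derivative_C_eval_neg_two ℂ (2 * p)
  rw [Int.negOnePow_even _ hn] at hdm2
  push_cast at hd2 hdm2
  refine ⟨by linear_combination hd2, by linear_combination hdm2, ?_, ?_, fun a ha ha2 ham2 ↦ ?_⟩
  · refine rootMultiplicity_eq_of_isRoot_iterate_derivative (fun m hm ↦ ?_) (by simp [hd2, hp0])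
    obtain rfl : m = 0 := by omega
    simp
  · refine rootMultiplicity_eq_of_isRoot_iterate_derivative (fun m hm ↦ ?_) (by simp [hdm2, hp0])
    obtain rfl : m = 0 := by omega
    simp [Int.negOnePow_even _ hn]
  · have ha4 : a ^ 2 ≠ 4 := by
      rw [show (4 : ℂ) = 2 ^ 2 by norm_num, Ne, sq_eq_sq_iff_eq_or_eq_neg]
      tauto
    have hd := derivative_C_eval_eq_zero ha4 ha
    have hdd := sq_sub_four_mul_derivative_derivative_C_eval ha4 ha
    push_cast at hdd
    refine ⟨hd, by linear_combination hdd, ?_⟩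
    refine rootMultiplicity_eq_of_isRoot_iterate_derivative (fun m hm ↦ ?_) fun h ↦ ?_
    · interval_cases m <;> simp [ha, hd]
    · simp only [Function.iterate_succ, Function.iterate_zero, Function.comp_apply, id_eq,
        derivative_sub, derivative_ofNat, sub_zero, IsRoot.def] at h
      simp [h, hp0] at hdd
end
end
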